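/- arXiv:1508.00614 — 4 statements merged into one kernel-verified Lean document; each statement's English description precedes it below -/
import Mathlib

section
/- Every popular matching M in G decomposes as M = M_0 ∪ M_1, where M_0 is the restriction of M to a vertex set A' ∪ B' (closed under M) on which M_0 is a dominant matching of the induced subgraph, and M_1 = M \ M_0 is a stable matching of the induced subgraph on the remaining vertices; moreover every blocking edge of M has both endpoints in A' ∪ B', and G_M contains no edge between A_1 and B \ B' and no edge between A \ A' and B_0. -/
open Classical

/-- A bipartite graph `G = (A ∪ B, E)` with strict preference lists:
`adj` is the edge relation, and each vertex ranks its neighbors by a rank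
function (lower rank = more preferred), injective on neighbors. -/
structure PrefSys (A B : Type) where
  adj : A → B → Prop
  rankA : A → B → ℕ
  rankB : B → A → ℕ
  rankA_inj : ∀ a b b', adj a b → adj a b' → rankA a b = rankA a b' → b = b'
  rankB_inj : ∀ b a a', adj a b → adj a' b → rankB b a = rankB b a' → a = a'

namespace PrefSys

variable {A B : Type} (P : PrefSys A B)

/-- `M` is a matching of `G`: a set of edges, no two sharing a vertex. -/
def IsMatching (M : Finset (A × B)) : Prop :=
  (∀ p ∈ M, P.adj p.1 p.2) ∧
  (∀ p ∈ M, ∀ q ∈ M, p.1 = q.1 → p = q) ∧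
  (∀ p ∈ M, ∀ q ∈ M, p.2 = q.2 → p = q)

/-- Vertex `a ∈ A` prefers matching `M` to matching `M'`:
`a` is matched in `M` and either unmatched in `M'` or matched to a strictly
worse partner in `M'`. -/
def prefA (M M' : Finset (A × B)) (a : A) : Prop :=
  ∃ b, (a, b) ∈ M ∧ ∀ b', (a, b') ∈ M' → P.rankA a b < P.rankA a b'

/-- Vertex `b ∈ B` prefers matching `M` to matching `M'`. -/
def prefB (M M' : Finset (A × B)) (b : B) : Prop :=
  ∃ a, (a, b) ∈ M ∧ ∀ a', (a', b) ∈ M' → P.rankB b a < P.rankB b a'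

/-- `φ(M, M')`: the number of vertices preferring `M` to `M'`. -/
noncomputable def phi (M M' : Finset (A × B)) : ℕ :=
  Nat.card {a : A // P.prefA M M' a} + Nat.card {b : B // P.prefB M M' b}

/-- A matching is popular if it never loses a head-to-head election. -/
def Popular (M : Finset (A × B)) : Prop :=
  P.IsMatching M ∧ ∀ M', P.IsMatching M' → P.phi M' M ≤ P.phi M M'

/-- `a`'s vote on the edge `(a,b)` versus its `M`-partner is `+`. -/
def voteAplus (M : Finset (A × B)) (a : A) (b : B) : Prop :=
  ∀ b', (a, b') ∈ M → P.rankA a b < P.rankA a b'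

/-- `b`'s vote on the edge `(a,b)` versus its `M`-partner is `+`. -/
def voteBplus (M : Finset (A × B)) (a : A) (b : B) : Prop :=
  ∀ a', (a', b) ∈ M → P.rankB b a < P.rankB b a'

/-- `(a,b)` is a blocking edge (an edge outside `M` labeled `(+,+)`). -/
def Blocking (M : Finset (A × B)) (a : A) (b : B) : Prop :=
  P.adj a b ∧ (a, b) ∉ M ∧ P.voteAplus M a b ∧ P.voteBplus M a b

/-- A stable matching: a matching with no blocking edge. -/
def Stable (M : Finset (A × B)) : Prop :=
  P.IsMatching M ∧ ∀ a b, ¬ P.Blocking M a b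

/-- A dominant matching: popular, and more popular than every larger matching. -/
def Dominant (M : Finset (A × B)) : Prop :=
  P.Popular M ∧ ∀ M', P.IsMatching M' → M.card < M'.card → P.phi M' M < P.phi M M'

/-- The edge `(a,b)` survives in the subgraph `G_M` (i.e. it is an edge of `G`
that is in `M` or is not labeled `(-,-)`). -/
def inGM (M : Finset (A × B)) (a : A) (b : B) : Prop :=
  P.adj a b ∧ ((a, b) ∈ M ∨ P.voteAplus M a b ∨ P.voteBplus M a b)

end PrefSys

namespace PrefSys

variable {A B : Type}

/-- The subgraph of `G` induced by the vertex sets `SA ⊆ A`, `SB ⊆ B`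
(preferences are inherited from `G`). -/
def restrict (P : PrefSys A B) (SA : Set A) (SB : Set B) : PrefSys A B where
  adj a b := P.adj a b ∧ a ∈ SA ∧ b ∈ SB
  rankA := P.rankA
  rankB := P.rankB
  rankA_inj := fun a b b' h h' => P.rankA_inj a b b' h.1 h'.1
  rankB_inj := fun b a a' h h' => P.rankB_inj b a a' h.1 h'.1

end PrefSys

namespace PrefSys

variable {A B : Type}

/-- Membership in `A₀` (Section 4 procedure, initialized empty): the `A`-side
endpoints of `(+,+)` edges, closed under men adjacent in `G_M` to a woman of
`B₀ = M(A₀)`. -/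
inductive InA0' (P : PrefSys A B) (M : Finset (A × B)) : A → Prop
  | blockEdge (a : A) (z : B) : P.Blocking M a z → InA0' P M a
  | step (a : A) (b : B) (a' : A) :
      InA0' P M a' → (a', b) ∈ M → P.inGM M a b → InA0' P M a

/-- Membership in `A₁` (Section 4 procedure, initialized empty): the
`M`-partners of the `B`-side endpoints of `(+,+)` edges, closed under
`M`-partners of women adjacent in `G_M` to a man of `A₁`. -/
inductive InA1' (P : PrefSys A B) (M : Finset (A × B)) : A → Prop
  | blockEdge (y : A) (z : B) (a : A) :
      P.Blocking M y z → (a, z) ∈ M → InA1' P M a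
  | step (a : A) (b : B) (a' : A) :
      InA1' P M a' → P.inGM M a' b → (a, b) ∈ M → InA1' P M a

end PrefSys

-- ==================== auxiliary development ====================
namespace PopAux
open PrefSys
set_option linter.unusedSectionVars false
set_option maxHeartbeats 1000000

variable {A B : Type}

/-- unique partner lemmas -/
theorem uniqA {P : PrefSys A B} {N : Finset (A × B)} (hN : P.IsMatching N)
    {a : A} {b b' : B} (h : (a, b) ∈ N) (h' : (a, b') ∈ N) : b = b' :=
  congrArg Prod.snd (hN.2.1 _ h _ h' rfl)

theorem uniqB {P : PrefSys A B} {N : Finset (A × B)} (hN : P.IsMatching N)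
    {a a' : A} {b : B} (h : (a, b) ∈ N) (h' : (a', b) ∈ N) : a = a' :=
  congrArg Prod.fst (hN.2.2 _ h _ h' rfl)

section sgn
variable [Fintype A] [Fintype B]

noncomputable def sgA (P : PrefSys A B) (M N : Finset (A × B)) (a : A) : ℤ :=
  (if P.prefA N M a then 1 else 0) - (if P.prefA M N a then 1 else 0)

noncomputable def sgB (P : PrefSys A B) (M N : Finset (A × B)) (b : B) : ℤ :=
  (if P.prefB N M b then 1 else 0) - (if P.prefB M N b then 1 else 0)

noncomputable def FF (P : PrefSys A B) (M N : Finset (A × B)) : ℤ :=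
  (∑ a : A, sgA P M N a) + (∑ b : B, sgB P M N b)

theorem card_int (p : A → Prop) :
    (Nat.card {a // p a} : ℤ) = ∑ a : A, (if p a then (1:ℤ) else 0) := by
  classical
  rw [Nat.card_eq_fintype_card, Fintype.card_subtype, Finset.card_filter]
  push_cast
  simp

theorem phi_sub (P : PrefSys A B) (M N : Finset (A × B)) :
    (P.phi N M : ℤ) - (P.phi M N : ℤ) = FF P M N := by
  unfold phi FF sgA sgB
  push_cast
  rw [card_int, card_int, card_int, card_int]
  rw [Finset.sum_sub_distrib, Finset.sum_sub_distrib]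
  ring

theorem FF_nonpos {P : PrefSys A B} {M : Finset (A × B)} (hM : P.Popular M)
    {N : Finset (A × B)} (hN : P.IsMatching N) : FF P M N ≤ 0 := by
  have := hM.2 N hN
  have h2 := phi_sub P M N
  omega

theorem improve_false {P : PrefSys A B} {M : Finset (A × B)} (hM : P.Popular M)
    {N : Finset (A × B)} (hN : P.IsMatching N) (h : 1 ≤ FF P M N) : False := by
  have := FF_nonpos hM hN
  omega

variable {P : PrefSys A B} {M : Finset (A × B)}

theorem sgA_congr {N N' : Finset (A × B)} {a : A}
    (h : ∀ c, (a, c) ∈ N ↔ (a, c) ∈ N') : sgA P M N a = sgA P M N' a := by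
  have h1 : P.prefA N M a ↔ P.prefA N' M a := by
    constructor
    · rintro ⟨b, hb, hc⟩; exact ⟨b, (h b).mp hb, hc⟩
    · rintro ⟨b, hb, hc⟩; exact ⟨b, (h b).mpr hb, hc⟩
  have h2 : P.prefA M N a ↔ P.prefA M N' a := by
    constructor
    · rintro ⟨b, hb, hc⟩; exact ⟨b, hb, fun b' hb' => hc b' ((h b').mpr hb')⟩
    · rintro ⟨b, hb, hc⟩; exact ⟨b, hb, fun b' hb' => hc b' ((h b').mp hb')⟩
  unfold sgA; rw [if_congr h1 rfl rfl, if_congr h2 rfl rfl]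

theorem sgB_congr {N N' : Finset (A × B)} {b : B}
    (h : ∀ x, (x, b) ∈ N ↔ (x, b) ∈ N') : sgB P M N b = sgB P M N' b := by
  have h1 : P.prefB N M b ↔ P.prefB N' M b := by
    constructor
    · rintro ⟨x, hx, hc⟩; exact ⟨x, (h x).mp hx, hc⟩
    · rintro ⟨x, hx, hc⟩; exact ⟨x, (h x).mpr hx, hc⟩
  have h2 : P.prefB M N b ↔ P.prefB M N' b := by
    constructor
    · rintro ⟨x, hx, hc⟩; exact ⟨x, hx, fun x' hx' => hc x' ((h x').mpr hx')⟩
    · rintro ⟨x, hx, hc⟩; exact ⟨x, hx, fun x' hx' => hc x' ((h x').mp hx')⟩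
  unfold sgB; rw [if_congr h1 rfl rfl, if_congr h2 rfl rfl]

theorem sgA_eq_zero {N : Finset (A × B)} {a : A}
    (h : ∀ c, (a, c) ∈ N ↔ (a, c) ∈ M) : sgA P M N a = 0 := by
  have h1 : ¬ P.prefA N M a := by
    rintro ⟨b, hb, hc⟩; exact lt_irrefl _ (hc b ((h b).mp hb))
  have h2 : ¬ P.prefA M N a := by
    rintro ⟨b, hb, hc⟩; exact lt_irrefl _ (hc b ((h b).mpr hb))
  simp [sgA, h1, h2]

theorem sgB_eq_zero {N : Finset (A × B)} {b : B}
    (h : ∀ x, (x, b) ∈ N ↔ (x, b) ∈ M) : sgB P M N b = 0 := by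
  have h1 : ¬ P.prefB N M b := by
    rintro ⟨x, hx, hc⟩; exact lt_irrefl _ (hc x ((h x).mp hx))
  have h2 : ¬ P.prefB M N b := by
    rintro ⟨x, hx, hc⟩; exact lt_irrefl _ (hc x ((h x).mpr hx))
  simp [sgB, h1, h2]

theorem sgA_ge : -1 ≤ sgA P M N a := by
  unfold sgA; split <;> split <;> omega

theorem sgB_ge : -1 ≤ sgB P M N b := by
  unfold sgB; split <;> split <;> omega

theorem sgA_eq_one_of_voteA {N : Finset (A × B)} {a : A} {b : B}
    (h1 : (a, b) ∈ N) (h2 : P.voteAplus M a b) : sgA P M N a = 1 := by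
  have hp : P.prefA N M a := ⟨b, h1, h2⟩
  have hn : ¬ P.prefA M N a := by
    rintro ⟨b', hb', hc⟩
    have := hc b h1
    have := h2 b' hb'
    omega
  simp [sgA, hp, hn]

theorem sgA_eq_one_of_freeM {N : Finset (A × B)} {a : A} {b : B}
    (h1 : (a, b) ∈ N) (h2 : ∀ c, (a, c) ∉ M) : sgA P M N a = 1 := by
  have hp : P.prefA N M a := ⟨b, h1, fun b' hb' => absurd hb' (h2 b')⟩
  have hn : ¬ P.prefA M N a := by rintro ⟨b', hb', _⟩; exact h2 b' hb'
  simp [sgA, hp, hn]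

theorem sgA_eq_neg_one {N : Finset (A × B)} {a : A} {c0 : B}
    (h1 : ∀ c, (a, c) ∉ N) (h2 : (a, c0) ∈ M) : sgA P M N a = -1 := by
  have hp : ¬ P.prefA N M a := by rintro ⟨b, hb, _⟩; exact h1 b hb
  have hn : P.prefA M N a := ⟨c0, h2, fun b' hb' => absurd hb' (h1 b')⟩
  simp [sgA, hp, hn]

theorem sgB_eq_one_of_voteB {N : Finset (A × B)} {a : A} {b : B}
    (h1 : (a, b) ∈ N) (h2 : P.voteBplus M a b) : sgB P M N b = 1 := by
  have hp : P.prefB N M b := ⟨a, h1, h2⟩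
  have hn : ¬ P.prefB M N b := by
    rintro ⟨a', ha', hc⟩
    have := hc a h1
    have := h2 a' ha'
    omega
  simp [sgB, hp, hn]

theorem sgB_eq_one_of_freeM {N : Finset (A × B)} {a : A} {b : B}
    (h1 : (a, b) ∈ N) (h2 : ∀ x, (x, b) ∉ M) : sgB P M N b = 1 := by
  have hp : P.prefB N M b := ⟨a, h1, fun x hx => absurd hx (h2 x)⟩
  have hn : ¬ P.prefB M N b := by rintro ⟨x, hx, _⟩; exact h2 x hx
  simp [sgB, hp, hn]

theorem sgB_eq_neg_one {N : Finset (A × B)} {b : B} {x0 : A}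
    (h1 : ∀ x, (x, b) ∉ N) (h2 : (x0, b) ∈ M) : sgB P M N b = -1 := by
  have hp : ¬ P.prefB N M b := by rintro ⟨x, hx, _⟩; exact h1 x hx
  have hn : P.prefB M N b := ⟨x0, h2, fun x' hx' => absurd hx' (h1 x')⟩
  simp [sgB, hp, hn]


/-- `link N a b`: add edge `(a,b)`, removing any edges at `a` or `b`. -/
noncomputable def link (N : Finset (A × B)) (a : A) (b : B) : Finset (A × B) :=
  insert (a, b) (N.filter (fun p => p.1 ≠ a ∧ p.2 ≠ b))

theorem mem_link {N : Finset (A × B)} {a x : A} {b c : B} :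
    (x, c) ∈ link N a b ↔ (x = a ∧ c = b) ∨ ((x, c) ∈ N ∧ x ≠ a ∧ c ≠ b) := by
  simp [link, Prod.ext_iff]

theorem link_isMatching {N : Finset (A × B)} {a : A} {b : B}
    (hN : P.IsMatching N) (hadj : P.adj a b) : P.IsMatching (link N a b) := by
  refine ⟨?_, ?_, ?_⟩
  · rintro ⟨x, c⟩ hp
    rcases mem_link.mp hp with ⟨rfl, rfl⟩ | ⟨h, -, -⟩
    · exact hadj
    · exact hN.1 _ h
  · rintro ⟨x, c⟩ hp ⟨x', c'⟩ hq (h : x = x')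
    subst h
    rcases mem_link.mp hp with ⟨rfl, rfl⟩ | ⟨hp', hne, -⟩ <;>
      rcases mem_link.mp hq with ⟨h1, h2⟩ | ⟨hq', hne', -⟩
    · simp [h2]
    · exact absurd rfl hne'
    · exact absurd h1 hne
    · exact hN.2.1 _ hp' _ hq' rfl
  · rintro ⟨x, c⟩ hp ⟨x', c'⟩ hq (h : c = c')
    subst h
    rcases mem_link.mp hp with ⟨rfl, rfl⟩ | ⟨hp', -, hne⟩ <;>
      rcases mem_link.mp hq with ⟨h1, h2⟩ | ⟨hq', -, hne'⟩
    · simp [h1]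
    · exact absurd rfl hne'
    · exact absurd h2 hne
    · exact hN.2.2 _ hp' _ hq' rfl

theorem sum_eq_pair {α : Type} [Fintype α] (f : α → ℤ) (a b : α) (h : a ≠ b)
    (h0 : ∀ c, c ≠ a → c ≠ b → f c = 0) : ∑ x, f x = f a + f b :=
  Fintype.sum_eq_add a b h (fun c hc => h0 c hc.1 hc.2)

theorem sum_eq_one {α : Type} [Fintype α] (f : α → ℤ) (a : α)
    (h0 : ∀ c, c ≠ a → f c = 0) : ∑ x, f x = f a :=
  Fintype.sum_eq_single a h0

/-- ML0: both endpoints of a blocking edge of a popular matching are matched. -/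
theorem blocking_matched (hM : P.Popular M) {a : A} {b : B}
    (hb : P.Blocking M a b) : (∃ c, (a, c) ∈ M) ∧ (∃ x, (x, b) ∈ M) := by
  obtain ⟨hadj, hnm, hva, hvb⟩ := hb
  set N := link M a b with hNdef
  have hNm : P.IsMatching N := link_isMatching hM.1 hadj
  have habN : (a, b) ∈ N := mem_link.mpr (Or.inl ⟨rfl, rfl⟩)
  by_cases hA : ∃ c, (a, c) ∈ M
  · by_cases hB : ∃ x, (x, b) ∈ M
    · exact ⟨hA, hB⟩
    · -- a matched to c0, b unmatched
      exfalso
      push_neg at hB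
      obtain ⟨c0, hc0⟩ := hA
      have hc0b : c0 ≠ b := by rintro rfl; exact hB a hc0
      have hsA : ∑ x : A, sgA P M N x = 1 := by
        rw [sum_eq_one _ a]
        · exact sgA_eq_one_of_voteA habN hva
        · intro x hx
          apply sgA_eq_zero
          intro c
          constructor
          · intro h
            rcases mem_link.mp h with ⟨h1, -⟩ | ⟨h1, -, -⟩
            · exact absurd h1 hx
            · exact h1
          · intro h
            refine mem_link.mpr (Or.inr ⟨h, hx, ?_⟩)
            rintro rfl
            exact hB x h
      have hsB : ∑ c : B, sgB P M N c = 0 := by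
        rw [sum_eq_pair _ b c0 (Ne.symm hc0b)]
        · rw [sgB_eq_one_of_freeM habN hB, sgB_eq_neg_one _ hc0]
          · omega
          · intro x hx
            rcases mem_link.mp hx with ⟨-, h2⟩ | ⟨h1, h2, -⟩
            · exact hc0b h2
            · exact h2 (uniqB hM.1 h1 hc0 ▸ rfl)
        · intro c hcb hcc0
          apply sgB_eq_zero
          intro x
          constructor
          · intro h
            rcases mem_link.mp h with ⟨-, h2⟩ | ⟨h1, -, -⟩
            · exact absurd h2 hcb
            · exact h1
          · intro h
            refine mem_link.mpr (Or.inr ⟨h, ?_, hcb⟩)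
            rintro rfl
            exact hcc0 (uniqA hM.1 h hc0)
      refine improve_false hM hNm ?_
      unfold FF; omega
  · push_neg at hA
    exfalso
    by_cases hB : ∃ x, (x, b) ∈ M
    · -- a unmatched, b matched to x0
      obtain ⟨x0, hx0⟩ := hB
      have hx0a : x0 ≠ a := by rintro rfl; exact hA b hx0
      have hsA : ∑ x : A, sgA P M N x = 0 := by
        rw [sum_eq_pair _ a x0 (Ne.symm hx0a)]
        · rw [sgA_eq_one_of_freeM habN hA, sgA_eq_neg_one _ hx0]
          · omega
          · intro c hc
            rcases mem_link.mp hc with ⟨h1, -⟩ | ⟨h1, h2, h3⟩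
            · exact hx0a h1
            · exact h3 (uniqA hM.1 h1 hx0)
        · intro x hxa hxx0
          apply sgA_eq_zero
          intro c
          constructor
          · intro h
            rcases mem_link.mp h with ⟨h1, -⟩ | ⟨h1, -, -⟩
            · exact absurd h1 hxa
            · exact h1
          · intro h
            refine mem_link.mpr (Or.inr ⟨h, hxa, ?_⟩)
            rintro rfl
            exact hxx0 (uniqB hM.1 h hx0)
      have hsB : ∑ c : B, sgB P M N c = 1 := by
        rw [sum_eq_one _ b]
        · exact sgB_eq_one_of_voteB habN hvb
        · intro c hcb
          apply sgB_eq_zero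
          intro x
          constructor
          · intro h
            rcases mem_link.mp h with ⟨-, h2⟩ | ⟨h1, -, -⟩
            · exact absurd h2 hcb
            · exact h1
          · intro h
            refine mem_link.mpr (Or.inr ⟨h, ?_, hcb⟩)
            rintro rfl
            exact hA c h
      refine improve_false hM hNm ?_
      unfold FF; omega
    · -- both unmatched
      push_neg at hB
      have hsA : ∑ x : A, sgA P M N x = 1 := by
        rw [sum_eq_one _ a]
        · exact sgA_eq_one_of_freeM habN hA
        · intro x hx
          apply sgA_eq_zero
          intro c
          constructor
          · intro h
            rcases mem_link.mp h with ⟨h1, -⟩ | ⟨h1, -, -⟩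
            · exact absurd h1 hx
            · exact h1
          · intro h
            exact mem_link.mpr (Or.inr ⟨h, hx, fun hc => hB x (hc ▸ h)⟩)
      have hsB : ∑ c : B, sgB P M N c = 1 := by
        rw [sum_eq_one _ b]
        · exact sgB_eq_one_of_freeM habN hB
        · intro c hc
          apply sgB_eq_zero
          intro x
          constructor
          · intro h
            rcases mem_link.mp h with ⟨-, h2⟩ | ⟨h1, -, -⟩
            · exact absurd h2 hc
            · exact h1
          · intro h
            exact mem_link.mpr (Or.inr ⟨h, fun hx => hA c (hx ▸ h), hc⟩)
      refine improve_false hM hNm ?_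
      unfold FF; omega

end sgn

section chains
variable [Fintype A] [Fintype B] {P : PrefSys A B} {M : Finset (A × B)}

/-- alternating chains for the `A₁` side -/
inductive Chain1 (P : PrefSys A B) (M : Finset (A × B)) (z : B) : Finset A → A → Prop
  | base (a₁ : A) : (a₁, z) ∈ M → Chain1 P M z {a₁} a₁
  | step (S : Finset A) (a' : A) (b : B) (a : A) :
      Chain1 P M z S a' → P.inGM M a' b → (a, b) ∈ M → a ∉ S →
      Chain1 P M z (insert a S) a

theorem chain1_mem {z S a} (h : Chain1 P M z S a) : a ∈ S := by
  cases h with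
  | base a₁ h => exact Finset.mem_singleton_self _
  | step S a' b a h1 h2 h3 h4 => exact Finset.mem_insert_self _ _

theorem chain1_matched {z S a} (h : Chain1 P M z S a) : ∃ c, (a, c) ∈ M := by
  cases h with
  | base a₁ h => exact ⟨z, h⟩
  | step S a' b a h1 h2 h3 h4 => exact ⟨b, h3⟩

theorem chain1_zpart {z S a} (h : Chain1 P M z S a) : ∃ a₁ ∈ S, (a₁, z) ∈ M := by
  induction h with
  | base a₁ h => exact ⟨a₁, Finset.mem_singleton_self _, h⟩
  | step S a' b a h1 h2 h3 h4 ih =>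
    obtain ⟨a₁, hS, hz⟩ := ih
    exact ⟨a₁, Finset.mem_insert_of_mem hS, hz⟩

theorem chain1_sub {z S a} (h : Chain1 P M z S a) :
    ∀ x ∈ S, ∃ S', S' ⊆ S ∧ Chain1 P M z S' x := by
  induction h with
  | base a₁ h =>
    intro x hx
    rw [Finset.mem_singleton] at hx
    subst hx
    exact ⟨{x}, Finset.Subset.refl _, Chain1.base x h⟩
  | step S a' b a h1 h2 h3 h4 ih =>
    intro x hx
    rcases Finset.mem_insert.mp hx with rfl | hx
    · exact ⟨insert x S, Finset.Subset.refl _, Chain1.step S a' b x h1 h2 h3 h4⟩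
    · obtain ⟨S', hsub, hc⟩ := ih x hx
      exact ⟨S', hsub.trans (Finset.subset_insert _ _), hc⟩

theorem inA1'_chain {a : A} (h : InA1' P M a) :
    ∃ y z S, P.Blocking M y z ∧ Chain1 P M z S a := by
  induction h with
  | blockEdge y z a hyz haz => exact ⟨y, z, {a}, hyz, Chain1.base a haz⟩
  | step a b a' h1 hin hab ih =>
    obtain ⟨y, z, S, hyz, hch⟩ := ih
    by_cases haS : a ∈ S
    · obtain ⟨S', hsub, hc⟩ := chain1_sub hch a haS
      exact ⟨y, z, S', hyz, hc⟩
    · exact ⟨y, z, insert a S, hyz, Chain1.step S a' b a hch hin hab haS⟩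

/-- Invariant along an `A₁` chain: a matching that ties with `M`, in which the
chain endpoint is unmatched. -/
theorem inv1 (hM : P.Popular M) {y : A} {z : B} (hyz : P.Blocking M y z)
    {S : Finset A} {a : A} (hch : Chain1 P M z S a) :
    y ∉ S →
    ∃ M', P.IsMatching M' ∧ (y, z) ∈ M' ∧ (∀ c, (a, c) ∉ M') ∧
      (∀ x, x ∉ S → x ≠ y → ∀ c, ((x, c) ∈ M' ↔ (x, c) ∈ M)) ∧
      (∀ c, (∀ x, (x, c) ∈ M → x ∉ S ∧ x ≠ y) → ∀ x, ((x, c) ∈ M' ↔ (x, c) ∈ M)) ∧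
      (∀ c, (y, c) ∈ M → ∀ x, (x, c) ∉ M') ∧
      0 ≤ FF P M M' := by
  have hMm := hM.1
  induction hch with
  | base a₁ hbase =>
    intro hyS
    have hya : y ≠ a₁ := by simpa using hyS
    obtain ⟨by_, hyby⟩ := (blocking_matched hM hyz).1
    have hzby : z ≠ by_ := by rintro rfl; exact hyz.2.1 hyby
    set M' := link M y z with hM'def
    have hNm : P.IsMatching M' := link_isMatching hMm hyz.1
    have hyzN : (y, z) ∈ M' := mem_link.mpr (Or.inl ⟨rfl, rfl⟩)
    have hfree : ∀ c, (a₁, c) ∉ M' := by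
      intro c hc
      rcases mem_link.mp hc with ⟨h1, -⟩ | ⟨h1, -, h3⟩
      · exact hya h1.symm
      · exact h3 (uniqA hMm h1 hbase)
    have hmen : ∀ x, x ∉ ({a₁} : Finset A) → x ≠ y →
        ∀ c, ((x, c) ∈ M' ↔ (x, c) ∈ M) := by
      intro x hxS hxy c
      rw [Finset.mem_singleton] at hxS
      constructor
      · intro h
        rcases mem_link.mp h with ⟨h1, -⟩ | ⟨h1, -, -⟩
        · exact absurd h1 hxy
        · exact h1
      · intro h
        refine mem_link.mpr (Or.inr ⟨h, hxy, ?_⟩)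
        rintro rfl
        exact hxS (uniqB hMm h hbase)
    have hwom : ∀ c, (∀ x, (x, c) ∈ M → x ∉ ({a₁} : Finset A) ∧ x ≠ y) →
        ∀ x, ((x, c) ∈ M' ↔ (x, c) ∈ M) := by
      intro c hc x
      constructor
      · intro h
        rcases mem_link.mp h with ⟨h1, h2⟩ | ⟨h1, -, -⟩
        · subst h2
          exact absurd (Finset.mem_singleton_self a₁) (hc a₁ hbase).1
        · exact h1
      · intro h
        refine mem_link.mpr (Or.inr ⟨h, (hc x h).2, ?_⟩)
        rintro rfl
        exact (hc a₁ hbase).1 (Finset.mem_singleton_self a₁)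
    have hypart : ∀ c, (y, c) ∈ M → ∀ x, (x, c) ∉ M' := by
      intro c hyc x hx
      rcases mem_link.mp hx with ⟨h1, h2⟩ | ⟨h1, h2, -⟩
      · subst h2; exact hyz.2.1 hyc
      · exact h2 (uniqB hMm h1 hyc)
    refine ⟨M', hNm, hyzN, hfree, hmen, hwom, hypart, ?_⟩
    have hsA : ∑ x : A, sgA P M M' x = 0 := by
      rw [sum_eq_pair _ y a₁ hya, sgA_eq_one_of_voteA hyzN hyz.2.2.1,
        sgA_eq_neg_one hfree hbase]
      · omega
      · intro x hxy hxa
        exact sgA_eq_zero (hmen x (by simpa using hxa) hxy)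
    have hsB : ∑ c : B, sgB P M M' c = 0 := by
      rw [sum_eq_pair _ z by_ hzby, sgB_eq_one_of_voteB hyzN hyz.2.2.2,
        sgB_eq_neg_one (hypart by_ hyby) hyby]
      · omega
      · intro c hcz hcby
        refine sgB_eq_zero (hwom c ?_ )
        intro x hx
        constructor
        · rw [Finset.mem_singleton]
          rintro rfl
          exact hcz (uniqA hMm hx hbase)
        · rintro rfl
          exact hcby (uniqA hMm hx hyby)
    unfold FF; omega
  | step S a' b a hch hin hab haS ih =>
    intro hyS
    have hya : y ≠ a := fun h => hyS (h ▸ Finset.mem_insert_self a S)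
    have hyS' : y ∉ S := fun h => hyS (Finset.mem_insert_of_mem h)
    obtain ⟨M', hNm, hyzN, hfreea', hmen, hwom, hypart, hFF⟩ := ih hyS'
    have ha'S : a' ∈ S := chain1_mem hch
    have haa' : a ≠ a' := fun h => haS (h ▸ ha'S)
    obtain ⟨a₁, ha₁S, ha₁z⟩ := chain1_zpart hch
    have hbz : b ≠ z := by
      rintro rfl
      exact haS (uniqB hMm hab ha₁z ▸ ha₁S)
    have habM' : (a, b) ∈ M' := (hmen a haS (Ne.symm hya) b).mpr hab
    have ha'bM : (a', b) ∉ M := fun h => haa' (uniqB hMm hab h)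
    have hv : P.voteAplus M a' b ∨ P.voteBplus M a' b := by
      rcases hin.2 with h | h | h
      · exact absurd h ha'bM
      · exact Or.inl h
      · exact Or.inr h
    obtain ⟨ca', hca'⟩ := chain1_matched hch
    set M'' := link M' a' b with hM''def
    have hNm'' : P.IsMatching M'' := link_isMatching hNm hin.1
    have ha'bM'' : (a', b) ∈ M'' := mem_link.mpr (Or.inl ⟨rfl, rfl⟩)
    have hya' : y ≠ a' := fun h => hyS' (h ▸ ha'S)
    have hfree'' : ∀ c, (a, c) ∉ M'' := by
      intro c hc
      rcases mem_link.mp hc with ⟨h1, -⟩ | ⟨h1, -, h3⟩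
      · exact haa' h1
      · exact h3 (uniqA hMm ((hmen a haS (Ne.symm hya) c).mp h1) hab)
    have hyz'' : (y, z) ∈ M'' :=
      mem_link.mpr (Or.inr ⟨hyzN, hya', Ne.symm hbz⟩)
    have hmen'' : ∀ x, x ∉ insert a S → x ≠ y →
        ∀ c, ((x, c) ∈ M'' ↔ (x, c) ∈ M) := by
      intro x hxS hxy c
      have hxa : x ≠ a := fun h => hxS (h ▸ Finset.mem_insert_self a S)
      have hxS' : x ∉ S := fun h => hxS (Finset.mem_insert_of_mem h)
      have hxa' : x ≠ a' := fun h => hxS' (h ▸ ha'S)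
      constructor
      · intro h
        rcases mem_link.mp h with ⟨h1, -⟩ | ⟨h1, -, -⟩
        · exact absurd h1 hxa'
        · exact (hmen x hxS' hxy c).mp h1
      · intro h
        refine mem_link.mpr (Or.inr ⟨(hmen x hxS' hxy c).mpr h, hxa', ?_⟩)
        intro hcbeq
        have hab' : (a, c) ∈ M' := by rw [hcbeq]; exact habM'
        exact hxa (uniqB hNm ((hmen x hxS' hxy c).mpr h) hab')
    have hwom'' : ∀ c, (∀ x, (x, c) ∈ M → x ∉ insert a S ∧ x ≠ y) →
        ∀ x, ((x, c) ∈ M'' ↔ (x, c) ∈ M) := by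
      intro c hc x
      have hcb : c ≠ b := fun h => (hc a (h ▸ hab)).1 (Finset.mem_insert_self a S)
      have hc' : ∀ x, (x, c) ∈ M → x ∉ S ∧ x ≠ y := fun x hx =>
        ⟨fun hS => (hc x hx).1 (Finset.mem_insert_of_mem hS), (hc x hx).2⟩
      constructor
      · intro h
        rcases mem_link.mp h with ⟨-, h2⟩ | ⟨h1, -, -⟩
        · exact absurd h2 hcb
        · exact (hwom c hc' x).mp h1
      · intro h
        have h1 : (x, c) ∈ M' := (hwom c hc' x).mpr h
        refine mem_link.mpr (Or.inr ⟨h1, ?_, hcb⟩)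
        rintro rfl
        exact hfreea' c h1
    have hypart'' : ∀ c, (y, c) ∈ M → ∀ x, (x, c) ∉ M'' := by
      intro c hyc x hx
      rcases mem_link.mp hx with ⟨-, h2⟩ | ⟨h1, -, -⟩
      · subst h2
        exact hya (uniqB hMm hyc hab)
      · exact hypart c hyc x h1
    refine ⟨M'', hNm'', hyz'', hfree'', hmen'', hwom'', hypart'', ?_⟩
    -- counting
    have hdA : ∀ x, x ≠ a → x ≠ a' →
        sgA P M M'' x - sgA P M M' x = 0 := by
      intro x hxa hxa'
      have : sgA P M M'' x = sgA P M M' x := by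
        apply sgA_congr
        intro c
        constructor
        · intro h
          rcases mem_link.mp h with ⟨h1, -⟩ | ⟨h1, -, -⟩
          · exact absurd h1 hxa'
          · exact h1
        · intro h
          refine mem_link.mpr (Or.inr ⟨h, hxa', ?_⟩)
          rintro rfl
          exact hxa (uniqB hNm h habM')
      omega
    have hdB : ∀ c, c ≠ b → sgB P M M'' c - sgB P M M' c = 0 := by
      intro c hcb
      have : sgB P M M'' c = sgB P M M' c := by
        apply sgB_congr
        intro x
        constructor
        · intro h
          rcases mem_link.mp h with ⟨-, h2⟩ | ⟨h1, -, -⟩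
          · exact absurd h2 hcb
          · exact h1
        · intro h
          refine mem_link.mpr (Or.inr ⟨h, ?_, hcb⟩)
          rintro rfl
          exact hfreea' c h
      omega
    have hsplitA : (∑ x : A, sgA P M M'' x) - (∑ x : A, sgA P M M' x) =
        (sgA P M M'' a - sgA P M M' a) + (sgA P M M'' a' - sgA P M M' a') := by
      rw [← Finset.sum_sub_distrib]
      exact sum_eq_pair _ a a' haa' hdA
    have hsplitB : (∑ c : B, sgB P M M'' c) - (∑ c : B, sgB P M M' c) =
        sgB P M M'' b - sgB P M M' b := by
      rw [← Finset.sum_sub_distrib]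
      exact sum_eq_one _ b hdB
    have h1 : sgA P M M' a = 0 := sgA_eq_zero (hmen a haS (Ne.symm hya))
    have h2 : sgA P M M'' a = -1 := sgA_eq_neg_one hfree'' hab
    have h3 : sgA P M M' a' = -1 := sgA_eq_neg_one hfreea' hca'
    have h4 : sgB P M M' b = 0 := by
      apply sgB_eq_zero
      intro x
      constructor
      · intro h
        have : x = a := uniqB hNm h habM'
        subst this; exact hab
      · intro h
        have : x = a := uniqB hMm h hab
        subst this; exact habM'
    rcases hv with hva | hvb
    · have h5 : sgA P M M'' a' = 1 := sgA_eq_one_of_voteA ha'bM'' hva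
      have h6 : -1 ≤ sgB P M M'' b := sgB_ge
      unfold FF at hFF ⊢; omega
    · have h5 : sgB P M M'' b = 1 := sgB_eq_one_of_voteB ha'bM'' hvb
      have h6 : -1 ≤ sgA P M M'' a' := sgA_ge
      unfold FF at hFF ⊢; omega

/-- ML2: an `A₁` man has no `G_M` edge to an `M`-unmatched woman. -/
theorem ml2 (hM : P.Popular M) {a : A} {b : B} (ha : InA1' P M a)
    (hin : P.inGM M a b) (hbfree : ∀ x, (x, b) ∉ M) : False := by
  have hMm := hM.1
  obtain ⟨y, z, S, hyz, hch⟩ := inA1'_chain ha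
  by_cases hyS : y ∈ S
  · obtain ⟨S', hsub, hch'⟩ := chain1_sub hch y hyS
    cases hch' with
    | base a1 hb => exact hyz.2.1 hb
    | step S'' a'' b'' a3 hch'' hin'' hab'' hyS'' =>
      obtain ⟨M', hNm, hyzN, hfreea'', hmen, hwom, hypart, hFF⟩ :=
        inv1 hM hyz hch'' hyS''
      have hfb'' : ∀ x, (x, b'') ∉ M' := hypart b'' hab''
      have hvnot : (a'', b'') ∉ M := by
        intro h
        have he : a'' = y := uniqB hMm h hab''
        exact hyS'' (he ▸ chain1_mem hch'')
      have hv : P.voteAplus M a'' b'' ∨ P.voteBplus M a'' b'' := by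
        rcases hin''.2 with h | h | h
        · exact absurd h hvnot
        · exact Or.inl h
        · exact Or.inr h
      set N := link M' a'' b'' with hNdef
      have hNm' : P.IsMatching N := link_isMatching hNm hin''.1
      have hmemN : (a'', b'') ∈ N := mem_link.mpr (Or.inl ⟨rfl, rfl⟩)
      have hdA : ∀ x, x ≠ a'' → sgA P M N x - sgA P M M' x = 0 := by
        intro x hx
        have : sgA P M N x = sgA P M M' x := by
          apply sgA_congr
          intro c
          constructor
          · intro h
            rcases mem_link.mp h with ⟨h1, -⟩ | ⟨h1, -, -⟩
            · exact absurd h1 hx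
            · exact h1
          · intro h
            refine mem_link.mpr (Or.inr ⟨h, hx, ?_⟩)
            intro he
            exact hfb'' x (he ▸ h)
        omega
      have hdB : ∀ c, c ≠ b'' → sgB P M N c - sgB P M M' c = 0 := by
        intro c hc
        have : sgB P M N c = sgB P M M' c := by
          apply sgB_congr
          intro x
          constructor
          · intro h
            rcases mem_link.mp h with ⟨-, h2⟩ | ⟨h1, -, -⟩
            · exact absurd h2 hc
            · exact h1
          · intro h
            refine mem_link.mpr (Or.inr ⟨h, ?_, hc⟩)
            intro he
            exact hfreea'' c (he ▸ h)
        omega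
      have hsplitA : (∑ x : A, sgA P M N x) - (∑ x : A, sgA P M M' x) =
          sgA P M N a'' - sgA P M M' a'' := by
        rw [← Finset.sum_sub_distrib]
        exact sum_eq_one _ a'' hdA
      have hsplitB : (∑ c : B, sgB P M N c) - (∑ c : B, sgB P M M' c) =
          sgB P M N b'' - sgB P M M' b'' := by
        rw [← Finset.sum_sub_distrib]
        exact sum_eq_one _ b'' hdB
      obtain ⟨ca'', hca''⟩ := chain1_matched hch''
      have h1 : sgA P M M' a'' = -1 := sgA_eq_neg_one hfreea'' hca''
      have h2 : sgB P M M' b'' = -1 := sgB_eq_neg_one hfb'' hab''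
      refine improve_false hM hNm' ?_
      rcases hv with hva | hvb
      · have h3 : sgA P M N a'' = 1 := sgA_eq_one_of_voteA hmemN hva
        have h4 : -1 ≤ sgB P M N b'' := sgB_ge
        unfold FF at hFF ⊢; omega
      · have h3 : sgB P M N b'' = 1 := sgB_eq_one_of_voteB hmemN hvb
        have h4 : -1 ≤ sgA P M N a'' := sgA_ge
        unfold FF at hFF ⊢; omega
  · obtain ⟨M', hNm, hyzN, hfree, hmen, hwom, hypart, hFF⟩ := inv1 hM hyz hch hyS
    have hbM' : ∀ x, (x, b) ∉ M' := by
      intro x hx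
      exact hbfree x ((hwom b (fun x' hx' => (hbfree x' hx').elim) x).mp hx)
    set N := link M' a b with hNdef
    have hNm' : P.IsMatching N := link_isMatching hNm hin.1
    have hmemN : (a, b) ∈ N := mem_link.mpr (Or.inl ⟨rfl, rfl⟩)
    have hdA : ∀ x, x ≠ a → sgA P M N x - sgA P M M' x = 0 := by
      intro x hx
      have : sgA P M N x = sgA P M M' x := by
        apply sgA_congr
        intro c
        constructor
        · intro h
          rcases mem_link.mp h with ⟨h1, -⟩ | ⟨h1, -, -⟩
          · exact absurd h1 hx
          · exact h1
        · intro h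
          refine mem_link.mpr (Or.inr ⟨h, hx, ?_⟩)
          intro he
          exact hbM' x (he ▸ h)
      omega
    have hdB : ∀ c, c ≠ b → sgB P M N c - sgB P M M' c = 0 := by
      intro c hc
      have : sgB P M N c = sgB P M M' c := by
        apply sgB_congr
        intro x
        constructor
        · intro h
          rcases mem_link.mp h with ⟨-, h2⟩ | ⟨h1, -, -⟩
          · exact absurd h2 hc
          · exact h1
        · intro h
          refine mem_link.mpr (Or.inr ⟨h, ?_, hc⟩)
          intro he
          exact hfree c (he ▸ h)
      omega
    have hsplitA : (∑ x : A, sgA P M N x) - (∑ x : A, sgA P M M' x) =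
        sgA P M N a - sgA P M M' a := by
      rw [← Finset.sum_sub_distrib]
      exact sum_eq_one _ a hdA
    have hsplitB : (∑ c : B, sgB P M N c) - (∑ c : B, sgB P M M' c) =
        sgB P M N b - sgB P M M' b := by
      rw [← Finset.sum_sub_distrib]
      exact sum_eq_one _ b hdB
    obtain ⟨ca, hca⟩ := chain1_matched hch
    have h1 : sgA P M M' a = -1 := sgA_eq_neg_one hfree hca
    have h2 : sgB P M M' b = 0 := by
      apply sgB_eq_zero
      intro x
      exact ⟨fun h => (hbM' x h).elim, fun h => (hbfree x h).elim⟩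
    have h3 : sgB P M N b = 1 := sgB_eq_one_of_freeM hmemN hbfree
    have h4 : -1 ≤ sgA P M N a := sgA_ge
    refine improve_false hM hNm' ?_
    unfold FF at hFF ⊢; omega

/-- alternating chains for the `A₀` side -/
inductive Chain0 (P : PrefSys A B) (M : Finset (A × B)) (y : A) : Finset A → A → Prop
  | base : Chain0 P M y {y} y
  | step (S : Finset A) (a' : A) (c : B) (a : A) (ba : B) :
      Chain0 P M y S a' → (a', c) ∈ M → P.inGM M a c → (a, ba) ∈ M → a ∉ S →
      Chain0 P M y (insert a S) a

theorem chain0_mem {y S a} (h : Chain0 P M y S a) : a ∈ S := by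
  cases h with
  | base => exact Finset.mem_singleton_self _
  | step S a' c a ba h1 h2 h3 h4 h5 => exact Finset.mem_insert_self _ _

theorem chain0_ymem {y S a} (h : Chain0 P M y S a) : y ∈ S := by
  induction h with
  | base => exact Finset.mem_singleton_self _
  | step S a' c a ba h1 h2 h3 h4 h5 ih => exact Finset.mem_insert_of_mem ih

theorem chain0_allMatched {y S a} (h : Chain0 P M y S a) :
    ∀ m ∈ S, m = y ∨ ∃ c, (m, c) ∈ M := by
  induction h with
  | base =>
    intro m hm
    exact Or.inl (Finset.mem_singleton.mp hm)
  | step S a' c a ba h1 h2 h3 h4 h5 ih =>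
    intro m hm
    rcases Finset.mem_insert.mp hm with rfl | hm
    · exact Or.inr ⟨ba, h4⟩
    · exact ih m hm

theorem chain0_sub {y S a} (h : Chain0 P M y S a) :
    ∀ x ∈ S, ∃ S', S' ⊆ S ∧ Chain0 P M y S' x := by
  induction h with
  | base =>
    intro x hx
    rw [Finset.mem_singleton] at hx
    subst hx
    exact ⟨{x}, Finset.Subset.refl _, Chain0.base⟩
  | step S a' c a ba h1 h2 h3 h4 h5 ih =>
    intro x hx
    rcases Finset.mem_insert.mp hx with rfl | hx
    · exact ⟨insert x S, Finset.Subset.refl _, Chain0.step S a' c x ba h1 h2 h3 h4 h5⟩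
    · obtain ⟨S', hsub, hc⟩ := ih x hx
      exact ⟨S', hsub.trans (Finset.subset_insert _ _), hc⟩

theorem inA0'_chain {a : A} (h : InA0' P M a) :
    ∀ {ca : B}, (a, ca) ∈ M → ∃ y z S, P.Blocking M y z ∧ Chain0 P M y S a := by
  induction h with
  | blockEdge a z hb =>
    intro ca hca
    exact ⟨a, z, {a}, hb, Chain0.base⟩
  | step a b a' h1 hab hin ih =>
    intro ca hca
    obtain ⟨y, z, S, hyz, hch⟩ := ih hab
    by_cases haS : a ∈ S
    · obtain ⟨S', hsub, hc⟩ := chain0_sub hch a haS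
      exact ⟨y, z, S', hyz, hc⟩
    · exact ⟨y, z, insert a S, hyz, Chain0.step S a' b a ca hch hab hin hca haS⟩

/-- Invariant along an `A₀` chain. -/
theorem inv0 (hM : P.Popular M) {y : A} {z : B} (hyz : P.Blocking M y z)
    {x : A} (hxz : (x, z) ∈ M)
    {S : Finset A} {a : A} (hch : Chain0 P M y S a) :
    x ∉ S →
    ∃ M', P.IsMatching M' ∧ (y, z) ∈ M' ∧
      (∀ c, (a, c) ∈ M → ∀ u, (u, c) ∉ M') ∧
      (∀ c, (x, c) ∉ M') ∧
      (∀ m, m ∉ S → m ≠ x → ∀ c, ((m, c) ∈ M' ↔ (m, c) ∈ M)) ∧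
      (∀ c, (∀ m, (m, c) ∈ M → m ∉ S ∧ m ≠ x) → ∀ u, ((u, c) ∈ M' ↔ (u, c) ∈ M)) ∧
      0 ≤ FF P M M' := by
  have hMm := hM.1
  induction hch with
  | base =>
    intro hxS
    have hxy : x ≠ y := by simpa using hxS
    obtain ⟨by_, hyby⟩ := (blocking_matched hM hyz).1
    have hzby : z ≠ by_ := by rintro rfl; exact hyz.2.1 hyby
    set M' := link M y z with hM'def
    have hNm : P.IsMatching M' := link_isMatching hMm hyz.1
    have hyzN : (y, z) ∈ M' := mem_link.mpr (Or.inl ⟨rfl, rfl⟩)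
    have hslot : ∀ c, (y, c) ∈ M → ∀ u, (u, c) ∉ M' := by
      intro c hyc u hu
      rcases mem_link.mp hu with ⟨h1, h2⟩ | ⟨h1, h2, -⟩
      · subst h2; exact hyz.2.1 hyc
      · exact h2 (uniqB hMm h1 hyc)
    have hfx : ∀ c, (x, c) ∉ M' := by
      intro c hc
      rcases mem_link.mp hc with ⟨h1, -⟩ | ⟨h1, -, h3⟩
      · exact hxy h1
      · exact h3 (uniqA hMm h1 hxz)
    have hmen : ∀ m, m ∉ ({y} : Finset A) → m ≠ x →
        ∀ c, ((m, c) ∈ M' ↔ (m, c) ∈ M) := by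
      intro m hmS hmx c
      rw [Finset.mem_singleton] at hmS
      constructor
      · intro h
        rcases mem_link.mp h with ⟨h1, -⟩ | ⟨h1, -, -⟩
        · exact absurd h1 hmS
        · exact h1
      · intro h
        refine mem_link.mpr (Or.inr ⟨h, hmS, ?_⟩)
        rintro rfl
        exact hmx (uniqB hMm h hxz)
    have hwom : ∀ c, (∀ m, (m, c) ∈ M → m ∉ ({y} : Finset A) ∧ m ≠ x) →
        ∀ u, ((u, c) ∈ M' ↔ (u, c) ∈ M) := by
      intro c hc u
      constructor
      · intro h
        rcases mem_link.mp h with ⟨h1, h2⟩ | ⟨h1, -, -⟩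
        · subst h2
          exact absurd rfl (hc x hxz).2
        · exact h1
      · intro h
        refine mem_link.mpr (Or.inr ⟨h, ?_, ?_⟩)
        · intro he
          exact (hc u h).1 (he ▸ Finset.mem_singleton_self y)
        · rintro rfl
          exact (hc x hxz).2 rfl
    refine ⟨M', hNm, hyzN, hslot, hfx, hmen, hwom, ?_⟩
    have hyx : y ≠ x := Ne.symm hxy
    have hsA : ∑ m : A, sgA P M M' m = 0 := by
      rw [sum_eq_pair _ y x hyx, sgA_eq_one_of_voteA hyzN hyz.2.2.1,
        sgA_eq_neg_one hfx hxz]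
      · omega
      · intro m hmy hmx
        exact sgA_eq_zero (hmen m (by simpa using hmy) hmx)
    have hsB : ∑ c : B, sgB P M M' c = 0 := by
      rw [sum_eq_pair _ z by_ hzby, sgB_eq_one_of_voteB hyzN hyz.2.2.2,
        sgB_eq_neg_one (hslot by_ hyby) hyby]
      · omega
      · intro c hcz hcby
        refine sgB_eq_zero (hwom c ?_)
        intro m hm
        constructor
        · rw [Finset.mem_singleton]
          rintro rfl
          exact hcby (uniqA hMm hm hyby)
        · rintro rfl
          exact hcz (uniqA hMm hm hxz)
    unfold FF; omega
  | step S a' c a ba hch hac hin hba haS ih =>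
    intro hxIn
    have hxa : x ≠ a := fun h => hxIn (h ▸ Finset.mem_insert_self a S)
    have hxS : x ∉ S := fun h => hxIn (Finset.mem_insert_of_mem h)
    obtain ⟨M', hNm, hyzN, hslot, hfx, hmen, hwom, hFF⟩ := ih hxS
    have ha'S : a' ∈ S := chain0_mem hch
    have haa' : a ≠ a' := fun h => haS (h ▸ ha'S)
    have hyS : y ∈ S := chain0_ymem hch
    have hya : y ≠ a := fun h => haS (h ▸ hyS)
    have hax : a ≠ x := Ne.symm hxa
    have hcfree : ∀ u, (u, c) ∉ M' := hslot c hac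
    have hacM : (a, c) ∉ M := fun h => haa' (uniqB hMm h hac)
    have hv : P.voteAplus M a c ∨ P.voteBplus M a c := by
      rcases hin.2 with h | h | h
      · exact absurd h hacM
      · exact Or.inl h
      · exact Or.inr h
    have habaM' : (a, ba) ∈ M' := (hmen a haS hax ba).mpr hba
    have hcba : c ≠ ba := by
      intro h
      apply haa'
      apply uniqB hMm _ hac
      rw [h]
      exact hba
    set M'' := link M' a c with hM''def
    have hNm'' : P.IsMatching M'' := link_isMatching hNm hin.1
    have hacM'' : (a, c) ∈ M'' := mem_link.mpr (Or.inl ⟨rfl, rfl⟩)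
    have hzc : z ≠ c := by
      rintro rfl
      exact hxS ((uniqB hMm hxz hac) ▸ ha'S)
    have hyz'' : (y, z) ∈ M'' := mem_link.mpr (Or.inr ⟨hyzN, hya, hzc⟩)
    have hbawom : ∀ m, (m, ba) ∈ M → m ∉ S ∧ m ≠ x := by
      intro m hm
      have : m = a := uniqB hMm hm hba
      subst this
      exact ⟨haS, hax⟩
    have hslot'' : ∀ e, (a, e) ∈ M → ∀ u, (u, e) ∉ M'' := by
      intro e hae u hu
      have heba : e = ba := uniqA hMm hae hba
      rcases mem_link.mp hu with ⟨-, h2⟩ | ⟨h1, h2, -⟩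
      · exact hcba (h2.symm.trans heba)
      · have h1' : (u, ba) ∈ M' := heba ▸ h1
        exact h2 (uniqB hMm ((hwom ba hbawom u).mp h1') hba)
    have hfx'' : ∀ e, (x, e) ∉ M'' := by
      intro e he
      rcases mem_link.mp he with ⟨h1, -⟩ | ⟨h1, -, -⟩
      · exact hxa h1
      · exact hfx e h1
    have hmen'' : ∀ m, m ∉ insert a S → m ≠ x →
        ∀ e, ((m, e) ∈ M'' ↔ (m, e) ∈ M) := by
      intro m hmIn hmx e
      have hma : m ≠ a := fun h => hmIn (h ▸ Finset.mem_insert_self a S)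
      have hmS : m ∉ S := fun h => hmIn (Finset.mem_insert_of_mem h)
      constructor
      · intro h
        rcases mem_link.mp h with ⟨h1, -⟩ | ⟨h1, -, -⟩
        · exact absurd h1 hma
        · exact (hmen m hmS hmx e).mp h1
      · intro h
        refine mem_link.mpr (Or.inr ⟨(hmen m hmS hmx e).mpr h, hma, ?_⟩)
        rintro rfl
        exact hcfree m ((hmen m hmS hmx e).mpr h)
    have hwom'' : ∀ e, (∀ m, (m, e) ∈ M → m ∉ insert a S ∧ m ≠ x) →
        ∀ u, ((u, e) ∈ M'' ↔ (u, e) ∈ M) := by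
      intro e he u
      have heba : e ≠ ba := fun h => (he a (h ▸ hba)).1 (Finset.mem_insert_self a S)
      have hec : e ≠ c := fun h => (he a' (h ▸ hac)).1 (Finset.mem_insert_of_mem ha'S)
      have he' : ∀ m, (m, e) ∈ M → m ∉ S ∧ m ≠ x := fun m hm =>
        ⟨fun hS => (he m hm).1 (Finset.mem_insert_of_mem hS), (he m hm).2⟩
      constructor
      · intro h
        rcases mem_link.mp h with ⟨-, h2⟩ | ⟨h1, -, -⟩
        · exact absurd h2 hec
        · exact (hwom e he' u).mp h1
      · intro h
        refine mem_link.mpr (Or.inr ⟨(hwom e he' u).mpr h, ?_, hec⟩)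
        intro h'
        have h1 : (a, e) ∈ M' := h' ▸ ((hwom e he' u).mpr h)
        have h2 : (a, e) ∈ M := (hmen a haS hax e).mp h1
        exact (he a h2).1 (Finset.mem_insert_self a S)
    refine ⟨M'', hNm'', hyz'', hslot'', hfx'', hmen'', hwom'', ?_⟩
    have hdA : ∀ m, m ≠ a → sgA P M M'' m - sgA P M M' m = 0 := by
      intro m hma
      have : sgA P M M'' m = sgA P M M' m := by
        apply sgA_congr
        intro e
        constructor
        · intro h
          rcases mem_link.mp h with ⟨h1, -⟩ | ⟨h1, -, -⟩
          · exact absurd h1 hma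
          · exact h1
        · intro h
          refine mem_link.mpr (Or.inr ⟨h, hma, ?_⟩)
          rintro rfl
          exact hcfree m h
      omega
    have hdB : ∀ e, e ≠ c → e ≠ ba → sgB P M M'' e - sgB P M M' e = 0 := by
      intro e hec heba
      have : sgB P M M'' e = sgB P M M' e := by
        apply sgB_congr
        intro u
        constructor
        · intro h
          rcases mem_link.mp h with ⟨-, h2⟩ | ⟨h1, -, -⟩
          · exact absurd h2 hec
          · exact h1
        · intro h
          refine mem_link.mpr (Or.inr ⟨h, ?_, hec⟩)
          intro h'
          have h1 : (a, e) ∈ M' := h' ▸ h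
          exact heba (uniqA hMm ((hmen a haS hax e).mp h1) hba)
      omega
    have hsplitA : (∑ m : A, sgA P M M'' m) - (∑ m : A, sgA P M M' m) =
        sgA P M M'' a - sgA P M M' a := by
      rw [← Finset.sum_sub_distrib]
      exact sum_eq_one _ a hdA
    have hsplitB : (∑ e : B, sgB P M M'' e) - (∑ e : B, sgB P M M' e) =
        (sgB P M M'' c - sgB P M M' c) + (sgB P M M'' ba - sgB P M M' ba) := by
      rw [← Finset.sum_sub_distrib]
      exact sum_eq_pair _ c ba hcba (fun e h1 h2 => hdB e h1 h2)
    have h1 : sgA P M M' a = 0 := sgA_eq_zero (hmen a haS hax)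
    have h2 : sgB P M M' c = -1 := sgB_eq_neg_one hcfree hac
    have h3 : sgB P M M' ba = 0 := sgB_eq_zero (hwom ba hbawom)
    have h4 : sgB P M M'' ba = -1 := sgB_eq_neg_one (hslot'' ba hba) hba
    rcases hv with hva | hvb
    · have h5 : sgA P M M'' a = 1 := sgA_eq_one_of_voteA hacM'' hva
      have h6 : -1 ≤ sgB P M M'' c := sgB_ge
      unfold FF at hFF ⊢; omega
    · have h5 : sgB P M M'' c = 1 := sgB_eq_one_of_voteB hacM'' hvb
      have h6 : -1 ≤ sgA P M M'' a := sgA_ge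
      unfold FF at hFF ⊢; omega

/-- ML1: every `A₀` man is matched. -/
theorem ml1 (hM : P.Popular M) {a : A} (ha : InA0' P M a)
    (hfree : ∀ c, (a, c) ∉ M) : False := by
  have hMm := hM.1
  cases ha with
  | blockEdge a2 z0 hb =>
    obtain ⟨ca, hca⟩ := (blocking_matched hM hb).1
    exact hfree ca hca
  | step a2 b a' ha' hab hin =>
    obtain ⟨y, z, S, hyz, hch⟩ := inA0'_chain ha' hab
    obtain ⟨x, hxz⟩ := (blocking_matched hM hyz).2
    have hax : a ≠ x := by rintro rfl; exact hfree z hxz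
    have haS : a ∉ S := by
      intro hS
      rcases chain0_allMatched hch a hS with rfl | ⟨ca, hca⟩
      · obtain ⟨by_, hyby⟩ := (blocking_matched hM hyz).1
        exact hfree by_ hyby
      · exact hfree ca hca
    by_cases hxS : x ∈ S
    · obtain ⟨S', hsub, hch'⟩ := chain0_sub hch x hxS
      cases hch' with
      | base => exact hyz.2.1 hxz
      | step S'' a'' c'' xv ba'' hch'' hac'' hin'' hba'' hxS'' =>
        obtain ⟨M', hNm, hyzN, hslot, hfx, hmen, hwom, hFF⟩ :=
          inv0 hM hyz hxz hch'' hxS''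
        have hc''free : ∀ u, (u, c'') ∉ M' := hslot c'' hac''
        have hxc''M : (x, c'') ∉ M := by
          intro h
          exact hxS'' ((uniqB hMm h hac'') ▸ chain0_mem hch'')
        have hv : P.voteAplus M x c'' ∨ P.voteBplus M x c'' := by
          rcases hin''.2 with h | h | h
          · exact absurd h hxc''M
          · exact Or.inl h
          · exact Or.inr h
        set N := link M' x c'' with hNdef
        have hNm' : P.IsMatching N := link_isMatching hNm hin''.1
        have hmemN : (x, c'') ∈ N := mem_link.mpr (Or.inl ⟨rfl, rfl⟩)
        have hdA : ∀ m, m ≠ x → sgA P M N m - sgA P M M' m = 0 := by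
          intro m hm
          have : sgA P M N m = sgA P M M' m := by
            apply sgA_congr
            intro e
            constructor
            · intro h
              rcases mem_link.mp h with ⟨h1, -⟩ | ⟨h1, -, -⟩
              · exact absurd h1 hm
              · exact h1
            · intro h
              refine mem_link.mpr (Or.inr ⟨h, hm, ?_⟩)
              rintro rfl
              exact hc''free m h
          omega
        have hdB : ∀ e, e ≠ c'' → sgB P M N e - sgB P M M' e = 0 := by
          intro e he
          have : sgB P M N e = sgB P M M' e := by
            apply sgB_congr
            intro u
            constructor
            · intro h
              rcases mem_link.mp h with ⟨-, h2⟩ | ⟨h1, -, -⟩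
              · exact absurd h2 he
              · exact h1
            · intro h
              refine mem_link.mpr (Or.inr ⟨h, ?_, he⟩)
              rintro rfl
              exact hfx e h
          omega
        have hsplitA : (∑ m : A, sgA P M N m) - (∑ m : A, sgA P M M' m) =
            sgA P M N x - sgA P M M' x := by
          rw [← Finset.sum_sub_distrib]
          exact sum_eq_one _ x hdA
        have hsplitB : (∑ e : B, sgB P M N e) - (∑ e : B, sgB P M M' e) =
            sgB P M N c'' - sgB P M M' c'' := by
          rw [← Finset.sum_sub_distrib]
          exact sum_eq_one _ c'' hdB
        have h1 : sgA P M M' x = -1 := sgA_eq_neg_one hfx hxz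
        have h2 : sgB P M M' c'' = -1 := sgB_eq_neg_one hc''free hac''
        refine improve_false hM hNm' ?_
        rcases hv with hva | hvb
        · have h3 : sgA P M N x = 1 := sgA_eq_one_of_voteA hmemN hva
          have h4 : -1 ≤ sgB P M N c'' := sgB_ge
          unfold FF at hFF ⊢; omega
        · have h3 : sgB P M N c'' = 1 := sgB_eq_one_of_voteB hmemN hvb
          have h4 : -1 ≤ sgA P M N x := sgA_ge
          unfold FF at hFF ⊢; omega
    · obtain ⟨M', hNm, hyzN, hslot, hfx, hmen, hwom, hFF⟩ :=
        inv0 hM hyz hxz hch hxS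
      have hbfree' : ∀ u, (u, b) ∉ M' := hslot b hab
      have haM' : ∀ e, (a, e) ∉ M' := fun e he =>
        hfree e ((hmen a haS hax e).mp he)
      set N := link M' a b with hNdef
      have hNm' : P.IsMatching N := link_isMatching hNm hin.1
      have hmemN : (a, b) ∈ N := mem_link.mpr (Or.inl ⟨rfl, rfl⟩)
      have hdA : ∀ m, m ≠ a → sgA P M N m - sgA P M M' m = 0 := by
        intro m hm
        have : sgA P M N m = sgA P M M' m := by
          apply sgA_congr
          intro e
          constructor
          · intro h
            rcases mem_link.mp h with ⟨h1, -⟩ | ⟨h1, -, -⟩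
            · exact absurd h1 hm
            · exact h1
          · intro h
            refine mem_link.mpr (Or.inr ⟨h, hm, ?_⟩)
            rintro rfl
            exact hbfree' m h
        omega
      have hdB : ∀ e, e ≠ b → sgB P M N e - sgB P M M' e = 0 := by
        intro e he
        have : sgB P M N e = sgB P M M' e := by
          apply sgB_congr
          intro u
          constructor
          · intro h
            rcases mem_link.mp h with ⟨-, h2⟩ | ⟨h1, -, -⟩
            · exact absurd h2 he
            · exact h1
          · intro h
            refine mem_link.mpr (Or.inr ⟨h, ?_, he⟩)
            rintro rfl
            exact haM' e h
        omega
      have hsplitA : (∑ m : A, sgA P M N m) - (∑ m : A, sgA P M M' m) =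
          sgA P M N a - sgA P M M' a := by
        rw [← Finset.sum_sub_distrib]
        exact sum_eq_one _ a hdA
      have hsplitB : (∑ e : B, sgB P M N e) - (∑ e : B, sgB P M M' e) =
          sgB P M N b - sgB P M M' b := by
        rw [← Finset.sum_sub_distrib]
        exact sum_eq_one _ b hdB
      have h1 : sgA P M M' a = 0 := sgA_eq_zero (hmen a haS hax)
      have h2 : sgA P M N a = 1 := sgA_eq_one_of_freeM hmemN hfree
      have h3 : sgB P M M' b = -1 := sgB_eq_neg_one hbfree' hab
      have h4 : -1 ≤ sgB P M N b := sgB_ge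
      refine improve_false hM hNm' ?_
      unfold FF at hFF ⊢; omega

theorem phi_mono {X Y Z W : Finset (A × B)}
    (hA : ∀ a, P.prefA X Y a → P.prefA Z W a)
    (hB : ∀ b, P.prefB X Y b → P.prefB Z W b) : P.phi X Y ≤ P.phi Z W := by
  unfold PrefSys.phi
  have h1 : Nat.card {a // P.prefA X Y a} ≤ Nat.card {a // P.prefA Z W a} := by
    classical
    rw [Nat.card_eq_fintype_card, Nat.card_eq_fintype_card]
    exact Fintype.card_subtype_mono _ _ hA
  have h2 : Nat.card {b // P.prefB X Y b} ≤ Nat.card {b // P.prefB Z W b} := by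
    classical
    rw [Nat.card_eq_fintype_card, Nat.card_eq_fintype_card]
    exact Fintype.card_subtype_mono _ _ hB
  omega

end chains
end PopAux


open PrefSys in
/-- every popular matching `M` decomposes as `M = M₀ ∪ M₁` where,
with `A' = A₀ ∪ A₁` and `B' = M(A')`, the part `M₀` of `M` inside `A' ∪ B'`
(which is closed under `M`) is a dominant matching of the induced subgraph,
and `M₁ = M \ M₀` is a stable matching of the subgraph induced by the
remaining vertices; moreover every blocking edge of `M` has both endpoints in
`A' ∪ B'`, and `G_M` has no edge between `A₁` and `B \ B'` and no edge between
`A \ A'` and `B₀ = M(A₀)`. -/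
theorem popular_decomposition {A B : Type} [Fintype A] [Fintype B]
    (P : PrefSys A B) (M : Finset (A × B)) (hM : P.Popular M) :
    ∃ M₀ M₁ : Finset (A × B),
      let SA : Set A := {a | InA0' P M a ∨ InA1' P M a}
      let SB : Set B := {b | ∃ a, (a, b) ∈ M ∧ a ∈ SA}
      M₀ ∪ M₁ = M ∧ M₁ = M \ M₀ ∧
      (∀ p, p ∈ M₀ ↔ p ∈ M ∧ p.1 ∈ SA) ∧
      (∀ p ∈ M, p.1 ∈ SA ↔ p.2 ∈ SB) ∧
      (P.restrict SA SB).Dominant M₀ ∧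
      (P.restrict SAᶜ SBᶜ).Stable M₁ ∧
      (∀ a b, P.Blocking M a b → a ∈ SA ∧ b ∈ SB) ∧
      (∀ a b, InA1' P M a → b ∉ SB → ¬ P.inGM M a b) ∧
      (∀ a b, a ∉ SA → (∃ a', InA0' P M a' ∧ (a', b) ∈ M) → ¬ P.inGM M a b) := by
  classical
  have hMm := hM.1
  set SA' : Set A := {a | InA0' P M a ∨ InA1' P M a} with hSA'
  set SB' : Set B := {b | ∃ a, (a, b) ∈ M ∧ a ∈ SA'} with hSB'
  set M0 : Finset (A × B) := M.filter (fun p => p.1 ∈ SA') with hM0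
  refine ⟨M0, M \ M0, ?_⟩
  intro SA SB
  -- basic facts
  have hmem0 : ∀ p : A × B, p ∈ M0 ↔ p ∈ M ∧ p.1 ∈ SA' := by
    intro p; simp [hM0]
  have hmem1 : ∀ p : A × B, p ∈ M \ M0 ↔ p ∈ M ∧ p.1 ∉ SA' := by
    intro p
    rw [Finset.mem_sdiff, hmem0 p]
    tauto
  have hSAmatched : ∀ a ∈ SA', ∃ c, (a, c) ∈ M := by
    intro a ha
    rcases ha with h | h
    · by_contra hc
      push_neg at hc
      exact PopAux.ml1 hM h hc
    · cases h with
      | blockEdge y z a2 hb hz => exact ⟨z, hz⟩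
      | step a2 b a' h1 h2 h3 => exact ⟨b, h3⟩
  have hitem4 : ∀ p ∈ M, p.1 ∈ SA' ↔ p.2 ∈ SB' := by
    rintro ⟨a, b⟩ hp
    constructor
    · intro h
      exact ⟨a, hp, h⟩
    · rintro ⟨a', ha'M, ha'⟩
      have : a' = a := PopAux.uniqB hMm ha'M hp
      exact this ▸ ha'
  have hblock : ∀ a b, P.Blocking M a b → a ∈ SA' ∧ b ∈ SB' := by
    intro a b h
    obtain ⟨x, hxb⟩ := (PopAux.blocking_matched hM h).2
    exact ⟨Or.inl (InA0'.blockEdge a b h),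
      ⟨x, hxb, Or.inr (InA1'.blockEdge a b x h hxb)⟩⟩
  have hitem8 : ∀ a b, InA1' P M a → b ∉ SB' → ¬ P.inGM M a b := by
    intro a b ha hb hin
    by_cases hbm : ∃ x, (x, b) ∈ M
    · obtain ⟨x, hx⟩ := hbm
      exact hb ⟨x, hx, Or.inr (InA1'.step x b a ha hin hx)⟩
    · push_neg at hbm
      exact PopAux.ml2 hM ha hin hbm
  have hitem9 : ∀ a b, a ∉ SA' → (∃ a', InA0' P M a' ∧ (a', b) ∈ M) →
      ¬ P.inGM M a b := by
    rintro a b ha ⟨a', ha0, ha'b⟩ hin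
    exact ha (Or.inl (InA0'.step a b a' ha0 ha'b hin))
  -- matching of M0 in restricted graph
  have hM0Match : (P.restrict SA' SB').IsMatching M0 := by
    refine ⟨?_, ?_, ?_⟩
    · rintro ⟨a, b⟩ hp
      obtain ⟨hpM, haSA⟩ := (hmem0 _).mp hp
      exact ⟨hMm.1 _ hpM, haSA, ⟨a, hpM, haSA⟩⟩
    · intro p hp q hq h
      exact hMm.2.1 p ((hmem0 p).mp hp).1 q ((hmem0 q).mp hq).1 h
    · intro p hp q hq h
      exact hMm.2.2 p ((hmem0 p).mp hp).1 q ((hmem0 q).mp hq).1 h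
  -- popularity of M0 in restricted graph
  have hpop : ∀ N0, (P.restrict SA' SB').IsMatching N0 →
      P.phi N0 M0 ≤ P.phi M0 N0 := by
    intro N0 hN0
    have hN0SA : ∀ p ∈ N0, p.1 ∈ SA' ∧ p.2 ∈ SB' := by
      intro p hp
      exact ⟨(hN0.1 p hp).2.1, (hN0.1 p hp).2.2⟩
    set N : Finset (A × B) := N0 ∪ (M \ M0) with hN
    have hNmatch : P.IsMatching N := by
      refine ⟨?_, ?_, ?_⟩
      · intro p hp
        rcases Finset.mem_union.mp hp with h | h
        · exact (hN0.1 p h).1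
        · exact hMm.1 p ((hmem1 p).mp h).1
      · rintro ⟨a, b⟩ hp ⟨a', b'⟩ hq (h : a = a')
        subst h
        rcases Finset.mem_union.mp hp with h1 | h1 <;>
          rcases Finset.mem_union.mp hq with h2 | h2
        · exact hN0.2.1 _ h1 _ h2 rfl
        · exact absurd (hN0SA _ h1).1 ((hmem1 _).mp h2).2
        · exact absurd (hN0SA _ h2).1 ((hmem1 _).mp h1).2
        · exact hMm.2.1 _ ((hmem1 _).mp h1).1 _ ((hmem1 _).mp h2).1 rfl
      · rintro ⟨a, b⟩ hp ⟨a', b'⟩ hq (h : b = b')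
        subst h
        rcases Finset.mem_union.mp hp with h1 | h1 <;>
          rcases Finset.mem_union.mp hq with h2 | h2
        · exact hN0.2.2 _ h1 _ h2 rfl
        · have h3 := ((hmem1 _).mp h2)
          exact absurd (hN0SA _ h1).2
            (fun hb => h3.2 ((hitem4 _ h3.1).mpr hb))
        · have h3 := ((hmem1 _).mp h1)
          exact absurd (hN0SA _ h2).2
            (fun hb => h3.2 ((hitem4 _ h3.1).mpr hb))
        · exact hMm.2.2 _ ((hmem1 _).mp h1).1 _ ((hmem1 _).mp h2).1 rfl
    have hle1 : P.phi N0 M0 ≤ P.phi N M := by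
      apply PopAux.phi_mono
      · rintro a ⟨b, hb, hc⟩
        refine ⟨b, Finset.mem_union_left _ hb, ?_⟩
        intro b' hb'
        exact hc b' ((hmem0 _).mpr ⟨hb', (hN0SA _ hb).1⟩)
      · rintro b ⟨a, ha, hc⟩
        refine ⟨a, Finset.mem_union_left _ ha, ?_⟩
        intro a' ha'
        refine hc a' ((hmem0 _).mpr ⟨ha', ?_⟩)
        exact (hitem4 _ ha').mpr (hN0SA _ ha).2
    have hle2 : P.phi M N ≤ P.phi M0 N0 := by
      apply PopAux.phi_mono
      · rintro a ⟨b, hb, hc⟩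
        have haSA : a ∈ SA' := by
          by_contra hcon
          have : (a, b) ∈ N :=
            Finset.mem_union_right _ ((hmem1 _).mpr ⟨hb, hcon⟩)
          exact lt_irrefl _ (hc b this)
        exact ⟨b, (hmem0 _).mpr ⟨hb, haSA⟩,
          fun b' hb' => hc b' (Finset.mem_union_left _ hb')⟩
      · rintro b ⟨a, ha, hc⟩
        have hbSB : b ∈ SB' := by
          by_contra hcon
          have hnot : a ∉ SA' := fun h => hcon ((hitem4 _ ha).mp h)
          have : (a, b) ∈ N :=
            Finset.mem_union_right _ ((hmem1 _).mpr ⟨ha, hnot⟩)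
          exact lt_irrefl _ (hc a this)
        exact ⟨a, (hmem0 _).mpr ⟨ha, (hitem4 _ ha).mpr hbSB⟩,
          fun a' ha' => hc a' (Finset.mem_union_left _ ha')⟩
    calc P.phi N0 M0 ≤ P.phi N M := hle1
      _ ≤ P.phi M N := hM.2 N hNmatch
      _ ≤ P.phi M0 N0 := hle2
  -- size maximality of M0
  have hsize : ∀ N0, (P.restrict SA' SB').IsMatching N0 → N0.card ≤ M0.card := by
    intro N0 hN0
    set SAfin : Finset A := Finset.univ.filter (· ∈ SA') with hSAfin
    have h1 : N0.card = (N0.image Prod.fst).card := by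
      rw [Finset.card_image_of_injOn]
      intro p hp q hq h
      exact hN0.2.1 p hp q hq h
    have h2 : M0.card = (M0.image Prod.fst).card := by
      rw [Finset.card_image_of_injOn]
      intro p hp q hq h
      exact hMm.2.1 p ((hmem0 p).mp hp).1 q ((hmem0 q).mp hq).1 h
    have h3 : N0.image Prod.fst ⊆ SAfin := by
      intro a ha
      obtain ⟨p, hp, rfl⟩ := Finset.mem_image.mp ha
      exact Finset.mem_filter.mpr ⟨Finset.mem_univ _, (hN0.1 p hp).2.1⟩
    have h4 : SAfin ⊆ M0.image Prod.fst := by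
      intro a ha
      obtain ⟨c, hc⟩ := hSAmatched a (Finset.mem_filter.mp ha).2
      exact Finset.mem_image.mpr
        ⟨(a, c), (hmem0 _).mpr ⟨hc, (Finset.mem_filter.mp ha).2⟩, rfl⟩
    calc N0.card = (N0.image Prod.fst).card := h1
      _ ≤ SAfin.card := Finset.card_le_card h3
      _ ≤ (M0.image Prod.fst).card := Finset.card_le_card h4
      _ = M0.card := h2.symm
  -- stability of M1
  have hstable : (P.restrict SA'ᶜ SB'ᶜ).Stable (M \ M0) := by
    constructor
    · refine ⟨?_, ?_, ?_⟩
      · rintro ⟨a, b⟩ hp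
        obtain ⟨hpM, ha⟩ := (hmem1 _).mp hp
        refine ⟨hMm.1 _ hpM, ha, ?_⟩
        intro hb
        exact ha ((hitem4 _ hpM).mpr hb)
      · intro p hp q hq h
        exact hMm.2.1 p ((hmem1 p).mp hp).1 q ((hmem1 q).mp hq).1 h
      · intro p hp q hq h
        exact hMm.2.2 p ((hmem1 p).mp hp).1 q ((hmem1 q).mp hq).1 h
    · intro a b hbl
      obtain ⟨⟨hadj, haC, hbC⟩, hnm, hva, hvb⟩ := hbl
      have hanotSA : a ∉ SA' := haC
      have hbnotSB : b ∉ SB' := hbC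
      have habM : (a, b) ∉ M := by
        intro h
        exact hnm ((hmem1 _).mpr ⟨h, hanotSA⟩)
      have hva' : P.voteAplus M a b := by
        intro b' hb'
        exact hva b' ((hmem1 _).mpr ⟨hb', hanotSA⟩)
      have hvb' : P.voteBplus M a b := by
        intro a' ha'
        refine hvb a' ((hmem1 _).mpr ⟨ha', ?_⟩)
        intro h
        exact hbnotSB ((hitem4 _ ha').mp h)
      exact hanotSA (hblock a b ⟨hadj, habM, hva', hvb'⟩).1
  refine ⟨?_, rfl, hmem0, hitem4, ?_, hstable, hblock, hitem8, hitem9⟩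
  · exact Finset.union_sdiff_of_subset (Finset.filter_subset _ _)
  · refine ⟨⟨hM0Match, ?_⟩, ?_⟩
    · intro N0 hN0
      exact hpop N0 hN0
    · intro N0 hN0 hlt
      exact absurd (hsize N0 hN0) (by omega)
end

section
/- Let M be a popular matching in G restricted to a subset of vertices V' closed under M, meaning M_0 = M ∩ (V' × V') matches exactly the vertices of M in V'. If there were a matching N_0 on V' more popular than M_0 (within the induced subgraph), then N_0 ∪ (M \ M_0) would be more popular than M in G; hence M_0 is popular in the induced subgraph on V'. -/
open Classical

open PrefSys in
/-- let `M` be popular in `G` and `V' = SA ∪ SB` a set of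
vertices closed under `M`, and let `M₀` be the restriction of `M` to `V'`.
If a matching `N₀` of the induced subgraph were more popular than `M₀` there,
then `N₀ ∪ (M \ M₀)` would be more popular than `M` in `G`; hence `M₀` is a
popular matching of the induced subgraph. -/
theorem restriction_popular {A B : Type} [Fintype A] [Fintype B]
    (P : PrefSys A B) (M : Finset (A × B)) (hM : P.Popular M)
    (SA : Set A) (SB : Set B)
    (hclosed : ∀ p ∈ M, p.1 ∈ SA ↔ p.2 ∈ SB)
    (M₀ : Finset (A × B))
    (hM₀ : ∀ p, p ∈ M₀ ↔ p ∈ M ∧ p.1 ∈ SA ∧ p.2 ∈ SB) :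
    (∀ N₀, (P.restrict SA SB).IsMatching N₀ →
        (P.restrict SA SB).phi M₀ N₀ < (P.restrict SA SB).phi N₀ M₀ →
        P.phi M (N₀ ∪ (M \ M₀)) < P.phi (N₀ ∪ (M \ M₀)) M) ∧
    (P.restrict SA SB).Popular M₀ := by
  set Q := P.restrict SA SB with hQdef
  have hM₀M : ∀ p ∈ M₀, p ∈ M := fun p hp => ((hM₀ p).1 hp).1
  have hM₀S : ∀ p ∈ M₀, p.1 ∈ SA ∧ p.2 ∈ SB := fun p hp => ((hM₀ p).1 hp).2
  have hMdiff : ∀ p ∈ M, p ∉ M₀ → p.1 ∉ SA ∧ p.2 ∉ SB := by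
    intro p hp hnp
    constructor
    · intro h1; exact hnp ((hM₀ p).2 ⟨hp, h1, (hclosed p hp).1 h1⟩)
    · intro h2; exact hnp ((hM₀ p).2 ⟨hp, (hclosed p hp).2 h2, h2⟩)
  -- M₀ is a matching of Q
  have hM₀match : Q.IsMatching M₀ := by
    refine ⟨?_, ?_, ?_⟩
    · intro p hp
      exact ⟨hM.1.1 p (hM₀M p hp), (hM₀S p hp).1, (hM₀S p hp).2⟩
    · intro p hp q hq h
      exact hM.1.2.1 p (hM₀M p hp) q (hM₀M q hq) h
    · intro p hp q hq h
      exact hM.1.2.2 p (hM₀M p hp) q (hM₀M q hq) h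
  have key : ∀ N₀, Q.IsMatching N₀ →
      P.IsMatching (N₀ ∪ (M \ M₀)) ∧
      P.phi (N₀ ∪ (M \ M₀)) M = Q.phi N₀ M₀ ∧
      P.phi M (N₀ ∪ (M \ M₀)) = Q.phi M₀ N₀ := by
    intro N₀ hN₀
    set N := N₀ ∪ (M \ M₀) with hNdef
    have hN₀S : ∀ p ∈ N₀, p.1 ∈ SA ∧ p.2 ∈ SB := fun p hp => (hN₀.1 p hp).2
    have memN : ∀ p : A × B, p ∈ N ↔ p ∈ N₀ ∨ (p ∈ M ∧ p ∉ M₀) := by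
      intro p; simp [hNdef, Finset.mem_union, Finset.mem_sdiff]
    -- edge structure at A-vertices
    have eA1 : ∀ a b, a ∈ SA → ((a, b) ∈ N ↔ (a, b) ∈ N₀) := by
      intro a b ha
      rw [memN]
      constructor
      · rintro (h | ⟨h1, h2⟩)
        · exact h
        · exact absurd ha (hMdiff _ h1 h2).1
      · exact Or.inl
    have eA2 : ∀ a b, a ∈ SA → ((a, b) ∈ M ↔ (a, b) ∈ M₀) := by
      intro a b ha
      constructor
      · intro h; exact (hM₀ _).2 ⟨h, ha, (hclosed _ h).1 ha⟩
      · exact hM₀M _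
    have eA3 : ∀ a b, a ∉ SA → ((a, b) ∈ N ↔ (a, b) ∈ M) := by
      intro a b ha
      rw [memN]
      constructor
      · rintro (h | ⟨h1, _⟩)
        · exact absurd (hN₀S _ h).1 ha
        · exact h1
      · intro h
        exact Or.inr ⟨h, fun hc => ha (hM₀S _ hc).1⟩
    -- edge structure at B-vertices
    have eB1 : ∀ a b, b ∈ SB → ((a, b) ∈ N ↔ (a, b) ∈ N₀) := by
      intro a b hb
      rw [memN]
      constructor
      · rintro (h | ⟨h1, h2⟩)
        · exact h
        · exact absurd hb (hMdiff _ h1 h2).2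
      · exact Or.inl
    have eB2 : ∀ a b, b ∈ SB → ((a, b) ∈ M ↔ (a, b) ∈ M₀) := by
      intro a b hb
      constructor
      · intro h; exact (hM₀ _).2 ⟨h, (hclosed _ h).2 hb, hb⟩
      · exact hM₀M _
    have eB3 : ∀ a b, b ∉ SB → ((a, b) ∈ N ↔ (a, b) ∈ M) := by
      intro a b hb
      rw [memN]
      constructor
      · rintro (h | ⟨h1, _⟩)
        · exact absurd (hN₀S _ h).2 hb
        · exact h1
      · intro h
        exact Or.inr ⟨h, fun hc => hb (hM₀S _ hc).2⟩
    -- N is a matching of G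
    have hNmatch : P.IsMatching N := by
      refine ⟨?_, ?_, ?_⟩
      · intro p hp
        rcases (memN p).1 hp with h | ⟨h, _⟩
        · exact (hN₀.1 p h).1
        · exact hM.1.1 p h
      · intro p hp q hq h
        rcases (memN p).1 hp with h1 | ⟨h1, h1'⟩ <;>
          rcases (memN q).1 hq with h2 | ⟨h2, h2'⟩
        · exact hN₀.2.1 p h1 q h2 h
        · exact absurd ((hN₀S p h1).1) (h ▸ (hMdiff q h2 h2').1)
        · exact absurd ((hN₀S q h2).1) (h ▸ (hMdiff p h1 h1').1)
        · exact hM.1.2.1 p h1 q h2 h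
      · intro p hp q hq h
        rcases (memN p).1 hp with h1 | ⟨h1, h1'⟩ <;>
          rcases (memN q).1 hq with h2 | ⟨h2, h2'⟩
        · exact hN₀.2.2 p h1 q h2 h
        · exact absurd ((hN₀S p h1).2) (h ▸ (hMdiff q h2 h2').2)
        · exact absurd ((hN₀S q h2).2) (h ▸ (hMdiff p h1 h1').2)
        · exact hM.1.2.2 p h1 q h2 h
    -- preference equivalences
    have pA1 : ∀ a, P.prefA N M a ↔ Q.prefA N₀ M₀ a := by
      intro a
      by_cases ha : a ∈ SA
      · constructor
        · rintro ⟨b, hb, h⟩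
          exact ⟨b, (eA1 a b ha).1 hb, fun b' hb' => h b' (hM₀M _ hb')⟩
        · rintro ⟨b, hb, h⟩
          exact ⟨b, (eA1 a b ha).2 hb, fun b' hb' => h b' ((eA2 a b' ha).1 hb')⟩
      · constructor
        · rintro ⟨b, hb, h⟩
          exact absurd (h b ((eA3 a b ha).1 hb)) (lt_irrefl _)
        · rintro ⟨b, hb, _⟩
          exact absurd (hN₀S _ hb).1 ha
    have pA2 : ∀ a, P.prefA M N a ↔ Q.prefA M₀ N₀ a := by
      intro a
      by_cases ha : a ∈ SA
      · constructor
        · rintro ⟨b, hb, h⟩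
          exact ⟨b, (eA2 a b ha).1 hb, fun b' hb' => h b' ((eA1 a b' ha).2 hb')⟩
        · rintro ⟨b, hb, h⟩
          exact ⟨b, hM₀M _ hb, fun b' hb' => h b' ((eA1 a b' ha).1 hb')⟩
      · constructor
        · rintro ⟨b, hb, h⟩
          exact absurd (h b ((eA3 a b ha).2 hb)) (lt_irrefl _)
        · rintro ⟨b, hb, _⟩
          exact absurd (hM₀S _ hb).1 ha
    have pB1 : ∀ b, P.prefB N M b ↔ Q.prefB N₀ M₀ b := by
      intro b
      by_cases hb : b ∈ SB
      · constructor
        · rintro ⟨a, ha, h⟩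
          exact ⟨a, (eB1 a b hb).1 ha, fun a' ha' => h a' (hM₀M _ ha')⟩
        · rintro ⟨a, ha, h⟩
          exact ⟨a, (eB1 a b hb).2 ha, fun a' ha' => h a' ((eB2 a' b hb).1 ha')⟩
      · constructor
        · rintro ⟨a, ha, h⟩
          exact absurd (h a ((eB3 a b hb).1 ha)) (lt_irrefl _)
        · rintro ⟨a, ha, _⟩
          exact absurd (hN₀S _ ha).2 hb
    have pB2 : ∀ b, P.prefB M N b ↔ Q.prefB M₀ N₀ b := by
      intro b
      by_cases hb : b ∈ SB
      · constructor
        · rintro ⟨a, ha, h⟩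
          exact ⟨a, (eB2 a b hb).1 ha, fun a' ha' => h a' ((eB1 a' b hb).2 ha')⟩
        · rintro ⟨a, ha, h⟩
          exact ⟨a, hM₀M _ ha, fun a' ha' => h a' ((eB1 a' b hb).1 ha')⟩
      · constructor
        · rintro ⟨a, ha, h⟩
          exact absurd (h a ((eB3 a b hb).2 ha)) (lt_irrefl _)
        · rintro ⟨a, ha, _⟩
          exact absurd (hM₀S _ ha).2 hb
    refine ⟨hNmatch, ?_, ?_⟩
    · unfold PrefSys.phi
      congr 1
      · exact Nat.card_congr (Equiv.subtypeEquivRight pA1)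
      · exact Nat.card_congr (Equiv.subtypeEquivRight pB1)
    · unfold PrefSys.phi
      congr 1
      · exact Nat.card_congr (Equiv.subtypeEquivRight pA2)
      · exact Nat.card_congr (Equiv.subtypeEquivRight pB2)
  have part1 : ∀ N₀, Q.IsMatching N₀ →
      Q.phi M₀ N₀ < Q.phi N₀ M₀ →
      P.phi M (N₀ ∪ (M \ M₀)) < P.phi (N₀ ∪ (M \ M₀)) M := by
    intro N₀ hN₀ hlt
    obtain ⟨_, e1, e2⟩ := key N₀ hN₀
    rw [e1, e2]
    exact hlt
  refine ⟨part1, hM₀match, ?_⟩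
  intro N₀ hN₀
  obtain ⟨hNmatch, e1, e2⟩ := key N₀ hN₀
  rw [← e1, ← e2]
  exact hM.2 _ hNmatch
end

section
/- A largest popular matching in a bipartite graph G with strict preference lists has size at least 2/3 of the size of a maximum matching of G. -/
open Classical

/-! A stable matching `S` of the instance `P.double`, in which every `a` gets a second copy `a₁`
that every `b` prefers to all first copies but that courts a dummy of its own first, collapses to
a matching `collapse S` of `G`. Labelling each vertex `±1` by the level of its `S`-edge gives a
dual certificate, so `collapse S` is popular. Moreover `a₁` competes for every neighbour of a
single `a`, and `a₀` for every neighbour of an `a` matched at level one; hence `collapse S` meets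
every edge of `G` and admits no augmenting path of length three. Such a matching has at least
two thirds the size of any matching, and a largest popular matching is at least as large. -/

open Finset

section Counting

variable {A B : Type}

lemma card_le_card_filter_fst_mem_image {S D : Finset (A × B)}
    (hS : Set.InjOn Prod.fst (S : Set (A × B))) (h : ∀ p ∈ S, ∃ b, (p.1, b) ∈ D) :
    #S ≤ #(D.filter fun d => d.1 ∈ S.image Prod.fst) := by
  rw [← card_image_of_injOn hS]
  refine (card_le_card fun a ha => ?_).trans (card_image_le (f := Prod.fst))
  obtain ⟨p, hp, rfl⟩ := mem_image.1 ha
  obtain ⟨b, hb⟩ := h p hp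
  exact mem_image.2 ⟨(p.1, b), mem_filter.2 ⟨hb, ha⟩, rfl⟩

lemma card_le_card_filter_snd_mem_image {S D : Finset (A × B)}
    (hS : Set.InjOn Prod.snd (S : Set (A × B))) (h : ∀ p ∈ S, ∃ a, (a, p.2) ∈ D) :
    #S ≤ #(D.filter fun d => d.2 ∈ S.image Prod.snd) := by
  rw [← card_image_of_injOn hS]
  refine (card_le_card fun b hb => ?_).trans (card_image_le (f := Prod.snd))
  obtain ⟨p, hp, rfl⟩ := mem_image.1 hb
  obtain ⟨a, ha⟩ := h p hp
  exact mem_image.2 ⟨(a, p.2), mem_filter.2 ⟨ha, hb⟩, rfl⟩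

/-- Each edge of `N` is charged to the `D`-edges at its covered endpoints: the edges covered at
both ends are charged twice in total, and the absence of the augmenting paths `a' b' a b` keeps
the edges covered at one end from sharing a `D`-edge. -/
theorem two_mul_card_le_three_mul_card {D N : Finset (A × B)}
    (hfst : Set.InjOn Prod.fst (N : Set (A × B))) (hsnd : Set.InjOn Prod.snd (N : Set (A × B)))
    (hcover : ∀ p ∈ N, (∃ b, (p.1, b) ∈ D) ∨ ∃ a, (a, p.2) ∈ D)
    (hpath : ∀ a b a' b', (a, b) ∈ N → (a', b') ∈ N → (a, b') ∈ D →
      (∀ x, (x, b) ∉ D) → (∀ y, (a', y) ∉ D) → False) :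
    2 * #N ≤ 3 * #D := by
  set NA := N.filter fun p => ¬ ∃ a, (a, p.2) ∈ D
  set NB := N.filter fun p => ¬ ∃ b, (p.1, b) ∈ D
  set DA := D.filter fun d => d.1 ∈ NA.image Prod.fst
  set DB := D.filter fun d => d.2 ∈ NB.image Prod.snd
  have hA : #(N.filter fun p => ∃ b, (p.1, b) ∈ D) ≤ #D :=
    (card_le_card_filter_fst_mem_image (hfst.mono (filter_subset _ _))
      fun p hp => (mem_filter.1 hp).2).trans (card_filter_le _ _)
  have hB : #(N.filter fun p => ∃ a, (a, p.2) ∈ D) ≤ #D :=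
    (card_le_card_filter_snd_mem_image (hsnd.mono (filter_subset _ _))
      fun p hp => (mem_filter.1 hp).2).trans (card_filter_le _ _)
  have hNA : #NA ≤ #DA := card_le_card_filter_fst_mem_image (hfst.mono (filter_subset _ _))
    fun p hp => (hcover p (mem_filter.1 hp).1).resolve_right (mem_filter.1 hp).2
  have hNB : #NB ≤ #DB := card_le_card_filter_snd_mem_image (hsnd.mono (filter_subset _ _))
    fun p hp => (hcover p (mem_filter.1 hp).1).resolve_left (mem_filter.1 hp).2
  have hdisj : Disjoint DA DB := by
    refine disjoint_filter.2 fun d hd hdA hdB => ?_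
    obtain ⟨p, hp, hpd⟩ := mem_image.1 hdA
    obtain ⟨q, hq, hqd⟩ := mem_image.1 hdB
    rw [mem_filter, not_exists] at hp hq
    exact hpath p.1 p.2 q.1 q.2 hp.1 hq.1 (by rw [hpd, hqd]; exact hd) hp.2 hq.2
  have hDAB : #DA + #DB ≤ #D := by
    rw [← card_union_of_disjoint hdisj]
    exact card_le_card (union_subset (filter_subset _ _) (filter_subset _ _))
  have hsplitA : #(N.filter fun p => ∃ a, (a, p.2) ∈ D) + #NA = #N :=
    card_filter_add_card_filter_not _
  have hsplitB : #(N.filter fun p => ∃ b, (p.1, b) ∈ D) + #NB = #N :=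
    card_filter_add_card_filter_not _
  omega

lemma sum_add_sum_nonpos_of_injOn [Fintype A] [Fintype B] {N : Finset (A × B)}
    (hfst : Set.InjOn Prod.fst (N : Set (A × B))) (hsnd : Set.InjOn Prod.snd (N : Set (A × B)))
    {f : A → ℤ} {g : B → ℤ} (hN : ∀ p ∈ N, f p.1 + g p.2 ≤ 0)
    (hf : ∀ a, (∀ b, (a, b) ∉ N) → f a ≤ 0) (hg : ∀ b, (∀ a, (a, b) ∉ N) → g b ≤ 0) :
    ∑ a, f a + ∑ b, g b ≤ 0 := by
  rw [← sum_sdiff (subset_univ (N.image Prod.fst)), ← sum_sdiff (subset_univ (N.image Prod.snd)),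
    sum_image hfst, sum_image hsnd]
  have hfree_f : ∑ a ∈ univ \ N.image Prod.fst, f a ≤ 0 := sum_nonpos fun a ha =>
    hf a fun b hb => (mem_sdiff.1 ha).2 (mem_image_of_mem Prod.fst hb)
  have hfree_g : ∑ b ∈ univ \ N.image Prod.snd, g b ≤ 0 := sum_nonpos fun b hb =>
    hg b fun a ha => (mem_sdiff.1 hb).2 (mem_image_of_mem Prod.snd ha)
  have hpairs : ∑ p ∈ N, f p.1 + ∑ p ∈ N, g p.2 ≤ 0 := by
    rw [← sum_add_distrib]
    exact sum_nonpos hN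
  linarith

end Counting

section Vote

variable {W : Type} (r : W → ℕ)

/-- `1`, `0` or `-1` according as a vertex ranking its options by `r` prefers its partner in `X`
to its partner in `Y`, likes them equally, or prefers the one in `Y`; here `X` and `Y` are the
(at most one-element) sets of partners of the vertex in two matchings. -/
noncomputable def netPref (X Y : W → Prop) : ℤ :=
  (if ∃ u, X u ∧ ∀ u', Y u' → r u < r u' then 1 else 0) -
    (if ∃ u, Y u ∧ ∀ u', X u' → r u < r u' then 1 else 0)

noncomputable def vote (Y : W → Prop) (w : W) : ℤ :=
  if ∀ u, Y u → r w < r u then 1 else if Y w then 0 else -1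

lemma vote_le_one (Y : W → Prop) (w : W) : vote r Y w ≤ 1 := by
  unfold vote
  split_ifs <;> norm_num

variable {r}

lemma netPref_eq_vote {X Y : W → Prop} {w : W} (hX : ∀ u, X u ↔ u = w)
    (hY : ∀ u u', Y u → Y u' → u = u') (hr : ∀ u, Y u → r u = r w → u = w) :
    netPref r X Y = vote r Y w := by
  simp only [netPref, vote, hX, exists_eq_left, forall_eq]
  by_cases hbest : ∀ u, Y u → r w < r u
  · have : ¬ ∃ u, Y u ∧ r u < r w := fun ⟨u, hu, hlt⟩ => (hbest u hu).not_gt hlt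
    rw [if_pos hbest, if_neg this, if_pos hbest]
    norm_num
  · rw [if_neg hbest, if_neg hbest]
    by_cases hw : Y w
    · have : ¬ ∃ u, Y u ∧ r u < r w := fun ⟨u, hu, hlt⟩ => by
        rw [hY u w hu hw] at hlt
        exact lt_irrefl _ hlt
      rw [if_neg this, if_pos hw]
      norm_num
    · obtain ⟨u, hu, hle⟩ : ∃ u, Y u ∧ r u ≤ r w := by simpa using hbest
      have hlt : r u < r w := hle.lt_of_ne fun h => hw (hr u hu h ▸ hu)
      rw [if_pos ⟨u, hu, hlt⟩, if_neg hw]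
      norm_num

lemma netPref_le_of_forall_not {X Y : W → Prop} {y : ℤ} (hX : ∀ u, ¬ X u) (hlow : -1 ≤ y)
    (hzero : (∀ u, ¬ Y u) → y = 0) : netPref r X Y ≤ y := by
  by_cases hY : ∃ u, Y u
  · simpa [netPref, hX, hY] using hlow
  · simp [netPref, hX, hY, hzero (not_exists.1 hY)]

lemma vote_eq_zero {Y : W → Prop} {w : W} (hw : Y w) : vote r Y w = 0 := by
  rw [vote, if_neg fun h => lt_irrefl _ (h w hw), if_pos hw]

lemma vote_eq_neg_one {Y : W → Prop} {u w : W} (hw : ¬ Y w) (hu : Y u) (hle : ¬ r w < r u) :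
    vote r Y w = -1 := by
  simp only [vote, hw, if_false]
  rw [if_neg fun h => hle (h u hu)]

end Vote

namespace PrefSys

variable {A B : Type}

section Popularity

variable {P : PrefSys A B} {M : Finset (A × B)}

lemma IsMatching.adj_of_mem (hM : P.IsMatching M) {a : A} {b : B} (h : (a, b) ∈ M) :
    P.adj a b :=
  hM.1 _ h

lemma IsMatching.injOn_fst (hM : P.IsMatching M) : Set.InjOn Prod.fst (M : Set (A × B)) :=
  fun p hp q hq => hM.2.1 p hp q hq

lemma IsMatching.injOn_snd (hM : P.IsMatching M) : Set.InjOn Prod.snd (M : Set (A × B)) :=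
  fun p hp q hq => hM.2.2 p hp q hq

lemma IsMatching.snd_eq (hM : P.IsMatching M) {a : A} {b b' : B} (h : (a, b) ∈ M)
    (h' : (a, b') ∈ M) : b = b' :=
  congrArg Prod.snd (hM.2.1 _ h _ h' rfl)

lemma IsMatching.fst_eq (hM : P.IsMatching M) {a a' : A} {b : B} (h : (a, b) ∈ M)
    (h' : (a', b) ∈ M) : a = a' :=
  congrArg Prod.fst (hM.2.2 _ h _ h' rfl)

variable (P) in
noncomputable def voteA (M : Finset (A × B)) (a : A) (b : B) : ℤ :=
  vote (P.rankA a) (fun b => (a, b) ∈ M) b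

variable (P) in
noncomputable def voteB (M : Finset (A × B)) (a : A) (b : B) : ℤ :=
  vote (P.rankB b) (fun a => (a, b) ∈ M) a

lemma voteA_le_one (a : A) (b : B) : P.voteA M a b ≤ 1 := vote_le_one _ _ _

lemma voteB_le_one (a : A) (b : B) : P.voteB M a b ≤ 1 := vote_le_one _ _ _

lemma voteA_eq_zero {a : A} {b : B} (h : (a, b) ∈ M) : P.voteA M a b = 0 := vote_eq_zero h

lemma voteB_eq_zero {a : A} {b : B} (h : (a, b) ∈ M) : P.voteB M a b = 0 := vote_eq_zero h

lemma voteA_eq_neg_one {a : A} {b b₀ : B} (h : (a, b) ∉ M) (h₀ : (a, b₀) ∈ M)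
    (hle : ¬ P.rankA a b < P.rankA a b₀) : P.voteA M a b = -1 :=
  vote_eq_neg_one h h₀ hle

lemma voteB_eq_neg_one {a a₀ : A} {b : B} (h : (a, b) ∉ M) (h₀ : (a₀, b) ∈ M)
    (hle : ¬ P.rankB b a < P.rankB b a₀) : P.voteB M a b = -1 :=
  vote_eq_neg_one h h₀ hle

lemma IsMatching.netPref_fst_eq_voteA {N : Finset (A × B)} (hM : P.IsMatching M)
    (hN : P.IsMatching N) {a : A} {b : B} (hab : (a, b) ∈ N) :
    netPref (P.rankA a) (fun b => (a, b) ∈ N) (fun b => (a, b) ∈ M) =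
      P.voteA M a b :=
  netPref_eq_vote (fun _ => ⟨fun h => hN.snd_eq h hab, fun h => h ▸ hab⟩)
    (fun _ _ => hM.snd_eq) fun _ hu => P.rankA_inj a _ b (hM.adj_of_mem hu) (hN.adj_of_mem hab)

lemma IsMatching.netPref_snd_eq_voteB {N : Finset (A × B)} (hM : P.IsMatching M)
    (hN : P.IsMatching N) {a : A} {b : B} (hab : (a, b) ∈ N) :
    netPref (P.rankB b) (fun a => (a, b) ∈ N) (fun a => (a, b) ∈ M) =
      P.voteB M a b :=
  netPref_eq_vote (fun _ => ⟨fun h => hN.fst_eq h hab, fun h => h ▸ hab⟩)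
    (fun _ _ => hM.fst_eq) fun _ hu => P.rankB_inj b _ a (hM.adj_of_mem hu) (hN.adj_of_mem hab)

variable [Fintype A] [Fintype B]

lemma natCast_phi (P : PrefSys A B) (M M' : Finset (A × B)) :
    (P.phi M M' : ℤ) =
      ∑ a, (if P.prefA M M' a then 1 else 0) + ∑ b, (if P.prefB M M' b then 1 else 0) := by
  simp [phi, Nat.card_eq_fintype_card, Fintype.card_subtype]

lemma phi_sub_phi (P : PrefSys A B) (M M' : Finset (A × B)) :
    (P.phi M M' : ℤ) - P.phi M' M =
      ∑ a, netPref (P.rankA a) (fun b => (a, b) ∈ M) (fun b => (a, b) ∈ M') +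
        ∑ b, netPref (P.rankB b) (fun a => (a, b) ∈ M) (fun a => (a, b) ∈ M') := by
  simp only [natCast_phi, netPref, sum_sub_distrib]
  unfold prefA prefB
  ring

/-- Sufficiency half of the LP-duality characterisation of popular matchings: `yA`, `yB` is a
feasible dual solution of value `0`. -/
theorem popular_of_dual {D : Finset (A × B)} (hD : P.IsMatching D) (yA : A → ℤ) (yB : B → ℤ)
    (hpair : ∀ p ∈ D, yA p.1 + yB p.2 = 0)
    (hfreeA : ∀ a, (∀ b, (a, b) ∉ D) → yA a = 0) (hfreeB : ∀ b, (∀ a, (a, b) ∉ D) → yB b = 0)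
    (hlowA : ∀ a, -1 ≤ yA a) (hlowB : ∀ b, -1 ≤ yB b)
    (hedge : ∀ a b, P.adj a b → P.voteA D a b + P.voteB D a b ≤ yA a + yB b) :
    P.Popular D := by
  refine ⟨hD, fun N hN => ?_⟩
  have hy : ∑ a, yA a + ∑ b, yB b = 0 := by
    refine le_antisymm (sum_add_sum_nonpos_of_injOn hD.injOn_fst hD.injOn_snd
      (fun p hp => (hpair p hp).le) (fun a ha => (hfreeA a ha).le) fun b hb => (hfreeB b hb).le) ?_
    have := sum_add_sum_nonpos_of_injOn hD.injOn_fst hD.injOn_snd (f := fun a => -yA a)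
      (g := fun b => -yB b) (fun p hp => by linarith [hpair p hp])
      (fun a ha => by simp [hfreeA a ha]) fun b hb => by simp [hfreeB b hb]
    simp only [sum_neg_distrib] at this
    linarith
  have hvotes := sum_add_sum_nonpos_of_injOn hN.injOn_fst hN.injOn_snd
    (f := fun a => netPref (P.rankA a) (fun b => (a, b) ∈ N) (fun b => (a, b) ∈ D) - yA a)
    (g := fun b => netPref (P.rankB b) (fun a => (a, b) ∈ N) (fun a => (a, b) ∈ D) - yB b)
    (fun p hp => by
      rw [hD.netPref_fst_eq_voteA hN hp, hD.netPref_snd_eq_voteB hN hp]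
      linarith [hedge p.1 p.2 (hN.adj_of_mem hp)])
    (fun a ha => sub_nonpos.2 (netPref_le_of_forall_not ha (hlowA a) (hfreeA a)))
    (fun b hb => sub_nonpos.2 (netPref_le_of_forall_not hb (hlowB b) (hfreeB b)))
  simp only [sum_sub_distrib] at hvotes
  have := phi_sub_phi P N D
  omega

end Popularity

section Stable

variable {P : PrefSys A B}

lemma notMem_of_voteAplus {M : Finset (A × B)} {a : A} {b : B} (hv : P.voteAplus M a b) :
    (a, b) ∉ M :=
  fun h => lt_irrefl _ (hv b h)

lemma voteAplus_of_mem {M : Finset (A × B)} (hM : P.IsMatching M) {a : A} {b b₀ : B}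
    (h : (a, b₀) ∈ M) (hlt : P.rankA a b < P.rankA a b₀) : P.voteAplus M a b :=
  fun _ h' => hM.snd_eq h h' ▸ hlt

lemma Stable.exists_better_of_voteAplus {M : Finset (A × B)} (hM : P.Stable M) {a : A} {b : B}
    (hab : P.adj a b) (hv : P.voteAplus M a b) :
    ∃ a', (a', b) ∈ M ∧ P.rankB b a' < P.rankB b a := by
  by_contra! hworse
  refine hM.2 a b ⟨hab, notMem_of_voteAplus hv, hv, fun a' ha' => ?_⟩
  refine (hworse a' ha').lt_of_ne fun h => notMem_of_voteAplus hv ?_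
  rwa [P.rankB_inj b a a' hab (hM.1.adj_of_mem ha') h]

end Stable

section GaleShapley

variable (P : PrefSys A B) [Fintype A] [Fintype B]

/-- Given the set `R` of pairs that have been rejected, every `a` proposes to its best neighbour
that has not rejected it. -/
noncomputable def proposals (R : Finset (A × B)) : Finset (A × B) :=
  univ.filter fun p => P.adj p.1 p.2 ∧ p ∉ R ∧
    ∀ b, P.adj p.1 b → (p.1, b) ∉ R → P.rankA p.1 p.2 ≤ P.rankA p.1 b

noncomputable def rejections (R : Finset (A × B)) : Finset (A × B) :=
  (P.proposals R).filter fun p => ∃ a, (a, p.2) ∈ P.proposals R ∧ P.rankB p.2 a < P.rankB p.2 p.1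

def RejectionsJustified (R : Finset (A × B)) : Prop :=
  ∀ p ∈ R, ∃ a, (a, p.2) ∈ P.proposals R ∧ P.rankB p.2 a < P.rankB p.2 p.1

variable {P}

lemma mem_proposals {R : Finset (A × B)} {a : A} {b : B} :
    (a, b) ∈ P.proposals R ↔
      P.adj a b ∧ (a, b) ∉ R ∧ ∀ b', P.adj a b' → (a, b') ∉ R → P.rankA a b ≤ P.rankA a b' := by
  simp [proposals]

lemma mem_rejections {R : Finset (A × B)} {a : A} {b : B} :
    (a, b) ∈ P.rejections R ↔
      (a, b) ∈ P.proposals R ∧ ∃ a', (a', b) ∈ P.proposals R ∧ P.rankB b a' < P.rankB b a := by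
  simp [rejections]

/-- The favourite proposer of `b` is not rejected, and its proposal survives the round. -/
lemma exists_proposal_union_rejections {R : Finset (A × B)} {a : A} {b : B}
    (h : (a, b) ∈ P.proposals R) :
    ∃ x, (x, b) ∈ P.proposals (R ∪ P.rejections R) ∧ P.rankB b x ≤ P.rankB b a := by
  obtain ⟨x, hx, hxmin⟩ := ((univ.filter fun x => (x, b) ∈ P.proposals R)).exists_min_image
    (P.rankB b) ⟨a, mem_filter.2 ⟨mem_univ _, h⟩⟩
  rw [mem_filter] at hx
  have hbest : ∀ a', (a', b) ∈ P.proposals R → P.rankB b x ≤ P.rankB b a' :=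
    fun a' ha' => hxmin a' (mem_filter.2 ⟨mem_univ _, ha'⟩)
  refine ⟨x, ?_, hbest a h⟩
  obtain ⟨hadj, hxR, hxmin'⟩ := mem_proposals.1 hx.2
  have hrej : (x, b) ∉ P.rejections R := fun hr => by
    obtain ⟨a', ha', hlt⟩ := (mem_rejections.1 hr).2
    exact (hbest a' ha').not_gt hlt
  refine mem_proposals.2 ⟨hadj, ?_, fun b' hb' hb'R => hxmin' b' hb' fun h => hb'R ?_⟩
  · rw [mem_union]
    exact fun h => h.elim hxR hrej
  · exact mem_union_left _ h

lemma RejectionsJustified.union_rejections {R : Finset (A × B)} (hR : P.RejectionsJustified R) :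
    P.RejectionsJustified (R ∪ P.rejections R) := by
  intro p hp
  obtain ⟨a', ha', hlt⟩ : ∃ a', (a', p.2) ∈ P.proposals R ∧ P.rankB p.2 a' < P.rankB p.2 p.1 := by
    rcases mem_union.1 hp with h | h
    · exact hR p h
    · exact (mem_rejections.1 h).2
  obtain ⟨x, hx, hle⟩ := exists_proposal_union_rejections ha'
  exact ⟨x, hx, hle.trans_lt hlt⟩

lemma stable_proposals {R : Finset (A × B)} (hR : P.RejectionsJustified R)
    (hsub : P.rejections R ⊆ R) : P.Stable (P.proposals R) := by
  have hnorej : ∀ a b, (a, b) ∉ P.rejections R := fun a b h =>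
    (mem_proposals.1 (mem_rejections.1 h).1).2.1 (hsub h)
  refine ⟨⟨fun p hp => (mem_proposals.1 hp).1, ?_, ?_⟩, ?_⟩
  · rintro ⟨a, b⟩ hp ⟨a', b'⟩ hq (rfl : a = a')
    obtain ⟨hab, hR, hmin⟩ := mem_proposals.1 hp
    obtain ⟨hab', hR', hmin'⟩ := mem_proposals.1 hq
    rw [P.rankA_inj a b b' hab hab' ((hmin b' hab' hR').antisymm (hmin' b hab hR))]
  · rintro ⟨a, b⟩ hp ⟨a', b'⟩ hq (rfl : b = b')
    by_contra hne
    have hne' : a ≠ a' := fun h => hne (h ▸ rfl)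
    have hrank : P.rankB b a ≠ P.rankB b a' := fun h =>
      hne' (P.rankB_inj b a a' (mem_proposals.1 hp).1 (mem_proposals.1 hq).1 h)
    rcases hrank.lt_or_gt with hlt | hlt
    · exact hnorej a' b (mem_rejections.2 ⟨hq, a, hp, hlt⟩)
    · exact hnorej a b (mem_rejections.2 ⟨hp, a', hq, hlt⟩)
  · rintro a b ⟨hab, -, hvA, hvB⟩
    by_cases hR' : (a, b) ∈ R
    · obtain ⟨a', ha', hlt⟩ := hR _ hR'
      exact (hvB a' ha').not_gt hlt
    · obtain ⟨b', hb', hmin⟩ := (univ.filter fun b' => P.adj a b' ∧ (a, b') ∉ R).exists_min_image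
        (P.rankA a) ⟨b, mem_filter.2 ⟨mem_univ _, hab, hR'⟩⟩
      obtain ⟨-, hab', hb'R⟩ := mem_filter.1 hb'
      have hprop : (a, b') ∈ P.proposals R := mem_proposals.2 ⟨hab', hb'R,
        fun c hc hcR => hmin c (mem_filter.2 ⟨mem_univ _, hc, hcR⟩)⟩
      exact (hvA b' hprop).not_ge (hmin b (mem_filter.2 ⟨mem_univ _, hab, hR'⟩))

variable (P) in
/-- Gale–Shapley: a rejection set of maximal size admits no further rejections. -/
theorem exists_stable : ∃ S, P.Stable S := by
  obtain ⟨R, hR, hmax⟩ := (univ.filter P.RejectionsJustified).exists_max_image card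
    ⟨∅, mem_filter.2 ⟨mem_univ _, fun p hp => absurd hp (notMem_empty p)⟩⟩
  have hR : P.RejectionsJustified R := (mem_filter.1 hR).2
  have hfix : R ∪ P.rejections R = R :=
    (eq_of_subset_of_card_le subset_union_left
      (hmax _ (mem_filter.2 ⟨mem_univ _, hR.union_rejections⟩))).symm
  exact ⟨_, stable_proposals hR (union_eq_left.1 hfix)⟩

end GaleShapley

section Doubling

open Sum

lemma rankA_lt_sup_succ [Fintype B] (P : PrefSys A B) (a : A) (b : B) :
    P.rankA a b < univ.sup (P.rankA a) + 1 :=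
  Nat.lt_succ_of_le (le_sup (mem_univ b))

lemma rankB_lt_sup_succ [Fintype A] (P : PrefSys A B) (a : A) (b : B) :
    P.rankB b a < univ.sup (P.rankB b) + 1 :=
  Nat.lt_succ_of_le (le_sup (mem_univ a))

/-- The instance `G'` whose stable matchings give dominant matchings of `G`. Each `a` has two
copies, `a₀ = inl a` and `a₁ = inr a`, sharing a dummy neighbour `d(a) = inr a`. The copy `a₀`
ranks the neighbours of `a` as `a` does and `d(a)` last; `a₁` ranks `d(a)` first and then the
neighbours of `a`; every `b` prefers all level-1 copies to all level-0 copies; `d(a)` prefers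
`a₀`. -/
noncomputable def double [Fintype A] [Fintype B] (P : PrefSys A B) : PrefSys (A ⊕ A) (B ⊕ A) where
  adj
    | inl a, inl b | inr a, inl b => P.adj a b
    | inl a, inr c | inr a, inr c => c = a
  rankA
    | inl a, inl b => P.rankA a b
    | inl a, inr _ => univ.sup (P.rankA a) + 1
    | inr a, inl b => P.rankA a b + 1
    | inr _, inr _ => 0
  rankB
    | inl b, inr a => P.rankB b a
    | inl b, inl a => P.rankB b a + (univ.sup (P.rankB b) + 1)
    | inr _, inl _ => 0
    | inr _, inr _ => 1
  rankA_inj := by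
    rintro (a | a) (b | c) (b' | c') h h' heq <;> simp only at h h' heq
    · exact congrArg inl (P.rankA_inj a b b' h h' heq)
    · exact absurd heq (P.rankA_lt_sup_succ a b).ne
    · exact absurd heq.symm (P.rankA_lt_sup_succ a b').ne
    · rw [h, h']
    · exact congrArg inl (P.rankA_inj a b b' h h' (by omega))
    · omega
    · omega
    · rw [h, h']
  rankB_inj := by
    rintro (b | c) (a | a) (a' | a') h h' heq <;> simp only at h h' heq
    · exact congrArg inl (P.rankB_inj b a a' h h' (by omega))
    · exact absurd heq (by have := P.rankB_lt_sup_succ a' b; omega)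
    · exact absurd heq (by have := P.rankB_lt_sup_succ a b; omega)
    · exact congrArg inr (P.rankB_inj b a a' h h' heq)
    · exact congrArg inl (h.symm.trans h')
    · omega
    · omega
    · exact congrArg inr (h.symm.trans h')

/-- The `A` side of the dual certificate of the popularity of `collapse S`. -/
noncomputable def dualA (S : Finset ((A ⊕ A) × (B ⊕ A))) (a : A) : ℤ :=
  if ∃ b, (inr a, inl b) ∈ S then -1 else if ∃ b, (inl a, inl b) ∈ S then 1 else 0

noncomputable def dualB (S : Finset ((A ⊕ A) × (B ⊕ A))) (b : B) : ℤ :=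
  if ∃ a, (inr a, inl b) ∈ S then 1 else if ∃ a, (inl a, inl b) ∈ S then -1 else 0

lemma neg_one_le_dualA (S : Finset ((A ⊕ A) × (B ⊕ A))) (a : A) : -1 ≤ dualA S a := by
  unfold dualA
  split_ifs <;> norm_num

lemma neg_one_le_dualB (S : Finset ((A ⊕ A) × (B ⊕ A))) (b : B) : -1 ≤ dualB S b := by
  unfold dualB
  split_ifs <;> norm_num

lemma dualA_of_inr {S : Finset ((A ⊕ A) × (B ⊕ A))} {a : A} {b : B} (h : (inr a, inl b) ∈ S) :
    dualA S a = -1 :=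
  if_pos ⟨b, h⟩

lemma dualB_of_inr {S : Finset ((A ⊕ A) × (B ⊕ A))} {a : A} {b : B} (h : (inr a, inl b) ∈ S) :
    dualB S b = 1 :=
  if_pos ⟨a, h⟩

variable [Fintype A] [Fintype B]

noncomputable def collapse (S : Finset ((A ⊕ A) × (B ⊕ A))) : Finset (A × B) :=
  univ.filter fun p => (inl p.1, inl p.2) ∈ S ∨ (inr p.1, inl p.2) ∈ S

lemma mem_collapse {S : Finset ((A ⊕ A) × (B ⊕ A))} {a : A} {b : B} :
    (a, b) ∈ collapse S ↔ (inl a, inl b) ∈ S ∨ (inr a, inl b) ∈ S := by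
  simp [collapse]

lemma dualA_eq_zero {S : Finset ((A ⊕ A) × (B ⊕ A))} {a : A} (ha : ∀ b, (a, b) ∉ collapse S) :
    dualA S a = 0 := by
  simp only [mem_collapse, not_or] at ha
  rw [dualA, if_neg fun ⟨b, h⟩ => (ha b).2 h, if_neg fun ⟨b, h⟩ => (ha b).1 h]

lemma dualB_eq_zero {S : Finset ((A ⊕ A) × (B ⊕ A))} {b : B} (hb : ∀ a, (a, b) ∉ collapse S) :
    dualB S b = 0 := by
  simp only [mem_collapse, not_or] at hb
  rw [dualB, if_neg fun ⟨a, h⟩ => (hb a).2 h, if_neg fun ⟨a, h⟩ => (hb a).1 h]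

variable {P : PrefSys A B} {S : Finset ((A ⊕ A) × (B ⊕ A))}

lemma eq_or_eq_of_double_adj_inr {x : A ⊕ A} {c : A} (h : P.double.adj x (inr c)) :
    x = inl c ∨ x = inr c := by
  rcases x with a | a
  exacts [Or.inl (congrArg inl (h : c = a).symm), Or.inr (congrArg inr (h : c = a).symm)]

namespace Stable

variable (hS : P.double.Stable S)
include hS

/-- `a₁` ranks `d(a)` first, so `d(a)` is never left single. -/
lemma dummy_matched (a : A) : (inl a, inr a) ∈ S ∨ (inr a, inr a) ∈ S := by
  by_contra! h
  have hv : P.double.voteAplus S (inr a) (inr a) := by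
    rintro (b | c) hy
    · exact Nat.succ_pos _
    · obtain rfl : c = a := hS.1.adj_of_mem hy
      exact absurd hy h.2
  obtain ⟨x, hx, -⟩ := hS.exists_better_of_voteAplus (show P.double.adj (inr a) (inr a) from rfl) hv
  rcases eq_or_eq_of_double_adj_inr (hS.1.adj_of_mem hx) with rfl | rfl
  exacts [h.1 hx, h.2 hx]

lemma inl_dummy_of_inr {a : A} {b : B} (h : (inr a, inl b) ∈ S) : (inl a, inr a) ∈ S :=
  (hS.dummy_matched a).resolve_right fun h' => inl_ne_inr (hS.1.snd_eq h h')

lemma not_inl_of_inr {a : A} {b b' : B} (h : (inr a, inl b) ∈ S) : (inl a, inl b') ∉ S :=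
  fun h' => inl_ne_inr (hS.1.snd_eq h' (hS.inl_dummy_of_inr h))

/-- If `a₁` held `d(a)` while `a₀` is single, `d(a)` would rather have `a₀`. -/
lemma inr_free {a : A} (h₀ : ∀ b, (inl a, inl b) ∉ S) (h₁ : ∀ b, (inr a, inl b) ∉ S) :
    ∀ y, (inr a, y) ∉ S := by
  rintro (b | c) hy
  · exact h₁ b hy
  obtain rfl : c = a := hS.1.adj_of_mem hy
  have hfree : ∀ y, (inl c, y) ∉ S := by
    rintro (b | c') hy'
    · exact h₀ b hy'
    · obtain rfl : c' = c := hS.1.adj_of_mem hy'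
      exact inl_ne_inr (hS.1.fst_eq hy' hy)
  obtain ⟨x, -, hlt⟩ := hS.exists_better_of_voteAplus (show P.double.adj (inl c) (inr c) from rfl)
    fun y hy => absurd hy (hfree y)
  exact Nat.not_lt_zero _ hlt

lemma exists_inr_of_voteAplus_inr {a : A} {b : B} (hab : P.adj a b)
    (hv : P.double.voteAplus S (inr a) (inl b)) :
    ∃ x, (inr x, inl b) ∈ S ∧ P.rankB b x < P.rankB b a := by
  obtain ⟨x | x, hx, hlt⟩ :=
    hS.exists_better_of_voteAplus (show P.double.adj (inr a) (inl b) from hab) hv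
  · change P.rankB b x + (univ.sup (P.rankB b) + 1) < P.rankB b a at hlt
    have := P.rankB_lt_sup_succ a b
    omega
  · exact ⟨x, hx, hlt⟩

lemma exists_of_voteAplus_inl {a : A} {b : B} (hab : P.adj a b)
    (hv : P.double.voteAplus S (inl a) (inl b)) :
    (∃ x, (inr x, inl b) ∈ S) ∨ ∃ x, (inl x, inl b) ∈ S ∧ P.rankB b x < P.rankB b a := by
  obtain ⟨x | x, hx, hlt⟩ :=
    hS.exists_better_of_voteAplus (show P.double.adj (inl a) (inl b) from hab) hv
  · change P.rankB b x + _ < P.rankB b a + _ at hlt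
    exact Or.inr ⟨x, hx, by omega⟩
  · exact Or.inl ⟨x, hx⟩

lemma exists_inr_of_free {a : A} {b : B} (hab : P.adj a b) (ha : ∀ b', (a, b') ∉ collapse S) :
    ∃ x, (inr x, inl b) ∈ S ∧ P.rankB b x < P.rankB b a := by
  simp only [mem_collapse, not_or] at ha
  exact hS.exists_inr_of_voteAplus_inr hab fun y hy =>
    absurd hy (hS.inr_free (fun b => (ha b).1) (fun b => (ha b).2) y)

/-- `a₀` holds `d(a)`, its last choice, so it would take any real neighbour. -/
lemma exists_of_inr {a : A} {b b₀ : B} (hab : P.adj a b) (h : (inr a, inl b₀) ∈ S) :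
    (∃ x, (inr x, inl b) ∈ S) ∨ ∃ x, (inl x, inl b) ∈ S ∧ P.rankB b x < P.rankB b a :=
  hS.exists_of_voteAplus_inl hab
    (voteAplus_of_mem hS.1 (hS.inl_dummy_of_inr h) (P.rankA_lt_sup_succ a b))

lemma dualA_of_inl {a : A} {b : B} (h : (inl a, inl b) ∈ S) : dualA S a = 1 := by
  rw [dualA, if_neg fun ⟨_, h'⟩ => hS.not_inl_of_inr h' h, if_pos ⟨b, h⟩]

lemma dualB_of_inl {a : A} {b : B} (h : (inl a, inl b) ∈ S) : dualB S b = -1 := by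
  rw [dualB, if_neg fun ⟨_, h'⟩ => inl_ne_inr (hS.1.fst_eq h h'), if_pos ⟨a, h⟩]

lemma dualA_add_dualB {a : A} {b : B} (h : (a, b) ∈ collapse S) : dualA S a + dualB S b = 0 := by
  rcases mem_collapse.1 h with h | h
  · rw [hS.dualA_of_inl h, hS.dualB_of_inl h]; norm_num
  · rw [dualA_of_inr h, dualB_of_inr h]; norm_num

lemma isMatching_collapse : P.IsMatching (collapse S) := by
  refine ⟨fun ⟨a, b⟩ hp => ?_, fun ⟨a, b⟩ hp ⟨a', b'⟩ hq heq => ?_,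
    fun ⟨a, b⟩ hp ⟨a', b'⟩ hq heq => ?_⟩
  · rcases mem_collapse.1 hp with h | h <;> exact hS.1.adj_of_mem h
  · obtain rfl : a = a' := heq
    rcases mem_collapse.1 hp with h | h <;> rcases mem_collapse.1 hq with h' | h'
    · rw [inl_injective (hS.1.snd_eq h h')]
    · exact absurd h (hS.not_inl_of_inr h')
    · exact absurd h' (hS.not_inl_of_inr h)
    · rw [inl_injective (hS.1.snd_eq h h')]
  · obtain rfl : b = b' := heq
    rcases mem_collapse.1 hp with h | h <;> rcases mem_collapse.1 hq with h' | h'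
    · rw [inl_injective (hS.1.fst_eq h h')]
    · exact absurd (hS.1.fst_eq h h') inl_ne_inr
    · exact absurd (hS.1.fst_eq h' h) inl_ne_inr
    · rw [inr_injective (hS.1.fst_eq h h')]

lemma vote_add_vote_le_of_inr {a : A} {b b₀ : B} (hab : P.adj a b) (hD : (a, b) ∉ collapse S)
    (h : (inr a, inl b₀) ∈ S) :
    P.voteA (collapse S) a b + P.voteB (collapse S) a b ≤ dualA S a + dualB S b := by
  have hcA := P.voteA_le_one (M := collapse S) a b
  have hcB := P.voteB_le_one (M := collapse S) a b
  rw [dualA_of_inr h]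
  by_cases hlt : P.rankA a b < P.rankA a b₀
  · obtain ⟨x, hx, hxa⟩ := hS.exists_inr_of_voteAplus_inr hab
      (voteAplus_of_mem hS.1 h (Nat.succ_lt_succ hlt))
    rw [dualB_of_inr hx, voteB_eq_neg_one hD (mem_collapse.2 (Or.inr hx)) (not_lt.2 hxa.le)]
    linarith
  · rw [voteA_eq_neg_one hD (mem_collapse.2 (Or.inr h)) hlt]
    rcases hS.exists_of_inr hab h with ⟨x, hx⟩ | ⟨x, hx, hxa⟩
    · rw [dualB_of_inr hx]
      linarith
    · rw [hS.dualB_of_inl hx, voteB_eq_neg_one hD (mem_collapse.2 (Or.inl hx)) (not_lt.2 hxa.le)]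

lemma vote_add_vote_le_of_inl {a : A} {b b₀ : B} (hab : P.adj a b) (hD : (a, b) ∉ collapse S)
    (h : (inl a, inl b₀) ∈ S) :
    P.voteA (collapse S) a b + P.voteB (collapse S) a b ≤ dualA S a + dualB S b := by
  have hcA := P.voteA_le_one (M := collapse S) a b
  have hcB := P.voteB_le_one (M := collapse S) a b
  rw [hS.dualA_of_inl h]
  by_cases hlt : P.rankA a b < P.rankA a b₀
  · rcases hS.exists_of_voteAplus_inl hab (voteAplus_of_mem hS.1 h hlt) with
      ⟨x, hx⟩ | ⟨x, hx, hxa⟩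
    · rw [dualB_of_inr hx]
      linarith
    · rw [hS.dualB_of_inl hx, voteB_eq_neg_one hD (mem_collapse.2 (Or.inl hx)) (not_lt.2 hxa.le)]
      linarith
  · rw [voteA_eq_neg_one hD (mem_collapse.2 (Or.inl h)) hlt]
    linarith [neg_one_le_dualB S b]

lemma vote_add_vote_le_of_free {a : A} {b : B} (hab : P.adj a b)
    (ha : ∀ b', (a, b') ∉ collapse S) :
    P.voteA (collapse S) a b + P.voteB (collapse S) a b ≤ dualA S a + dualB S b := by
  obtain ⟨x, hx, hxa⟩ := hS.exists_inr_of_free hab ha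
  rw [dualA_eq_zero ha, dualB_of_inr hx,
    voteB_eq_neg_one (ha b) (mem_collapse.2 (Or.inr hx)) (not_lt.2 hxa.le)]
  linarith [P.voteA_le_one (M := collapse S) a b]

lemma vote_add_vote_le_dual {a : A} {b : B} (hab : P.adj a b) :
    P.voteA (collapse S) a b + P.voteB (collapse S) a b ≤ dualA S a + dualB S b := by
  by_cases hD : (a, b) ∈ collapse S
  · rw [voteA_eq_zero hD, voteB_eq_zero hD, hS.dualA_add_dualB hD]
    norm_num
  by_cases ha : ∃ b₀, (a, b₀) ∈ collapse S
  · obtain ⟨b₀, hb₀⟩ := ha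
    rcases mem_collapse.1 hb₀ with h | h
    exacts [hS.vote_add_vote_le_of_inl hab hD h, hS.vote_add_vote_le_of_inr hab hD h]
  · exact hS.vote_add_vote_le_of_free hab (not_exists.1 ha)

theorem popular_collapse : P.Popular (collapse S) :=
  popular_of_dual hS.isMatching_collapse (dualA S) (dualB S)
    (fun _ hp => hS.dualA_add_dualB hp) (fun _ => dualA_eq_zero) (fun _ => dualB_eq_zero)
    (neg_one_le_dualA S) (neg_one_le_dualB S) fun _ _ => hS.vote_add_vote_le_dual

lemma exists_collapse_of_free {a : A} {b : B} (hab : P.adj a b)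
    (ha : ∀ b', (a, b') ∉ collapse S) : ∃ a', (a', b) ∈ collapse S :=
  let ⟨x, hx, _⟩ := hS.exists_inr_of_free hab ha
  ⟨x, mem_collapse.2 (Or.inr hx)⟩

lemma not_augmenting_path {a a' : A} {b b' : B} (hab : P.adj a b) (ha'b' : P.adj a' b')
    (hab' : (a, b') ∈ collapse S) (hb : ∀ x, (x, b) ∉ collapse S)
    (ha' : ∀ y, (a', y) ∉ collapse S) : False := by
  rcases mem_collapse.1 hab' with h | h
  · obtain ⟨x, hx, -⟩ := hS.exists_inr_of_free ha'b' ha'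
    exact inl_ne_inr (hS.1.fst_eq h hx)
  · rcases hS.exists_of_inr hab h with ⟨x, hx⟩ | ⟨x, hx, -⟩
    exacts [hb x (mem_collapse.2 (Or.inr hx)), hb x (mem_collapse.2 (Or.inl hx))]

end Stable

end Doubling

end PrefSys

theorem max_popular_ge_two_thirds_general {A B : Type} [Fintype A] [Fintype B]
    (P : PrefSys A B) (M : Finset (A × B))
    (hmax : ∀ M', P.Popular M' → M'.card ≤ M.card) :
    ∀ N, P.IsMatching N → 2 * N.card ≤ 3 * M.card := by
  intro N hN
  obtain ⟨S, hS⟩ := P.double.exists_stable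
  calc 2 * N.card ≤ 3 * (PrefSys.collapse S).card :=
        two_mul_card_le_three_mul_card hN.injOn_fst hN.injOn_snd
          (fun p hp => or_iff_not_imp_left.2 fun ha =>
            hS.exists_collapse_of_free (hN.adj_of_mem hp) (not_exists.1 ha))
          fun a b a' b' hab ha'b' hab' hb ha' =>
            hS.not_augmenting_path (hN.adj_of_mem hab) (hN.adj_of_mem ha'b') hab' hb ha'
    _ ≤ 3 * M.card := Nat.mul_le_mul_left 3 (hmax _ hS.popular_collapse)

/-- A largest popular matching has size at least `2/3` of the
size of a maximum matching. -/
theorem max_popular_ge_two_thirds {A B : Type} [Fintype A] [Fintype B]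
    (P : PrefSys A B) (M : Finset (A × B)) (hM : P.Popular M)
    (hmax : ∀ M', P.Popular M' → M'.card ≤ M.card) :
    ∀ N, P.IsMatching N → 2 * N.card ≤ 3 * M.card :=
  max_popular_ge_two_thirds_general P M hmax
end

section
/- If M is a popular matching in G and there is an alternating path in G_M with respect to M from a vertex unmatched in M, then every vertex on that path other than possibly endpoints beyond a single (+,+) edge has a consistent f-value; in particular, if every edge of G_M between a vertex of f-value 1 on the A-side and f-value 0 on the B-side is absent, there is no augmenting path with respect to M in G_M between an unmatched man (f-value 1) and an unmatched woman (f-value 0). -/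
open Classical

namespace PrefSys

variable {A B : Type} (P : PrefSys A B)

/-- Vertices of `G`, as a sum type. -/
abbrev V (A B : Type) := Sum A B

/-- Adjacency in the subgraph `G_M` (symmetrized). -/
def vAdjGM (M : Finset (A × B)) : V A B → V A B → Prop
  | .inl a, .inr b => P.inGM M a b
  | .inr b, .inl a => P.inGM M a b
  | _, _ => False

/-- The (unordered) pair `{x,y}` is an edge of the matching `M`. -/
def vInM (M : Finset (A × B)) : V A B → V A B → Prop
  | .inl a, .inr b => (a, b) ∈ M
  | .inr b, .inl a => (a, b) ∈ M
  | _, _ => False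

/-- The (unordered) pair `{x,y}` is an edge labeled `(+,+)` wrt `M`. -/
def vPlusPlus (M : Finset (A × B)) : V A B → V A B → Prop
  | .inl a, .inr b => P.Blocking M a b
  | .inr b, .inl a => P.Blocking M a b
  | _, _ => False

/-- The vertex `x` is matched in `M`. -/
def vMatched (M : Finset (A × B)) : V A B → Prop
  | .inl a => ∃ b, (a, b) ∈ M
  | .inr b => ∃ a, (a, b) ∈ M

/-- The list of consecutive pairs of a vertex list. -/
def edgesOf (v : List (V A B)) : List (V A B × V A B) := v.zip v.tail

/-- An alternating path with respect to `M` in the subgraph `G_M`: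
a list of distinct vertices, consecutive ones adjacent in `G_M`, whose edges
alternate between matching and non-matching edges. -/
def IsAltPath (M : Finset (A × B)) (v : List (V A B)) : Prop :=
  v.Nodup ∧ v.Chain' (P.vAdjGM M) ∧
  (edgesOf v).Chain' (fun e f => vInM M e.1 e.2 ↔ ¬ vInM M f.1 f.2)

/-- An augmenting path with respect to `M` in `G_M`: an alternating path with
at least one edge, both of whose endpoints are unmatched in `M`. -/
def IsAugPath (M : Finset (A × B)) (v : List (V A B)) : Prop :=
  P.IsAltPath M v ∧ 2 ≤ v.length ∧
  (∀ x, v.head? = some x → ¬ vMatched M x) ∧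
  (∀ x, v.getLast? = some x → ¬ vMatched M x)

/-- The edges of a cycle given by a vertex list (consecutive pairs plus the
closing edge from the last vertex to the first). -/
def cycEdgesOf (v : List (V A B)) : List (V A B × V A B) :=
  match v.head?, v.getLast? with
  | some x, some y => edgesOf v ++ [(y, x)]
  | _, _ => []

/-- An alternating cycle with respect to `M` in the subgraph `G_M`. -/
def IsAltCycle (M : Finset (A × B)) (v : List (V A B)) : Prop :=
  v.Nodup ∧ 4 ≤ v.length ∧
  (∀ e ∈ cycEdgesOf v, P.vAdjGM M e.1 e.2) ∧
  (cycEdgesOf v).Chain' (fun e f => vInM M e.1 e.2 ↔ ¬ vInM M f.1 f.2)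

/-- The set of `G`-edges (as pairs in `A × B`) used by a list of vertex pairs. -/
noncomputable def edgeFinset (l : List (V A B × V A B)) : Finset (A × B) :=
  (l.filterMap (fun e => match e with
    | (.inl a, .inr b) => some (a, b)
    | (.inr b, .inl a) => some (a, b)
    | _ => none)).toFinset

/-- `M ⊕ ρ`: switch `M` along the path with vertex list `v`. -/
noncomputable def augment (M : Finset (A × B)) (v : List (V A B)) : Finset (A × B) :=
  symmDiff M (edgeFinset (edgesOf v))

end PrefSys

/-! Call a vertex `x` *aligned* when `f x = 1` exactly if `x` is a man. The hypotheses say that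
unmatched vertices are aligned, that every edge of `M` has an aligned endpoint, and that no edge
of `G_M` joins two aligned vertices. Walking along an alternating path from an unmatched vertex,
each non-matching edge therefore leads from an aligned to a non-aligned vertex and each matching
edge back to an aligned one, so the path cannot end with a non-matching edge at an unmatched
vertex. -/

section Alternating

variable {α : Type*} {adj inM : α → α → Prop} {S : α → Prop}

theorem iff_inM_of_adj (hind : ∀ x y, adj x y → S x → ¬ S y)
    (hcov : ∀ x y, inM x y → S x ∨ S y) {x y : α} (hxy : adj x y) (hx : S x ↔ ¬ inM x y) :
    S y ↔ inM x y := by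
  by_cases hm : inM x y
  · exact iff_of_true ((hcov x y hm).resolve_left (hx.not_left.mpr hm)) hm
  · exact iff_of_false (hind x y hxy (hx.mpr hm)) hm

theorem exists_inM_getLast_of_alternating (hind : ∀ x y, adj x y → S x → ¬ S y)
    (hcov : ∀ x y, inM x y → S x ∨ S y) :
    ∀ (l : List α) (x y : α), (x :: y :: l).IsChain adj →
      ((x :: y :: l).zip (y :: l)).IsChain (fun e e' => inM e.1 e.2 ↔ ¬ inM e'.1 e'.2) →
      (S x ↔ ¬ inM x y) → S ((y :: l).getLast (List.cons_ne_nil y l)) →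
      ∃ w, inM w ((y :: l).getLast (List.cons_ne_nil y l))
  | [], x, y, hadj, _, hx, hy =>
    ⟨x, (iff_inM_of_adj hind hcov (List.isChain_cons_cons.mp hadj).1 hx).mp hy⟩
  | w :: l, x, y, hadj, halt, hx, hlast => by
    rw [List.isChain_cons_cons] at hadj
    simp only [List.zip_cons_cons, List.isChain_cons_cons] at halt
    have hy : S y ↔ ¬ inM y w := (iff_inM_of_adj hind hcov hadj.1 hx).trans halt.1
    exact exists_inM_getLast_of_alternating hind hcov l y w hadj.2 halt.2 hy hlast

end Alternating

namespace PrefSys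

variable {A B : Type}

theorem vMatched_of_vInM {M : Finset (A × B)} :
    ∀ {x y : V A B}, vInM M x y → vMatched M x ∧ vMatched M y
  | .inl _, .inr _, h => ⟨⟨_, h⟩, ⟨_, h⟩⟩
  | .inr _, .inl _, h => ⟨⟨_, h⟩, ⟨_, h⟩⟩

theorem not_isAugPath_of_independent_cover (P : PrefSys A B) (M : Finset (A × B))
    (S : V A B → Prop) (hind : ∀ x y, P.vAdjGM M x y → S x → ¬ S y)
    (hcov : ∀ x y, vInM M x y → S x ∨ S y) (hunm : ∀ x, ¬ vMatched M x → S x)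
    (v : List (V A B)) : ¬ P.IsAugPath M v := by
  rintro ⟨⟨-, hadj, halt⟩, hlen, hhead, hlast⟩
  obtain ⟨x, y, l, rfl⟩ : ∃ x y l, v = x :: y :: l := by
    match v, hlen with
    | x :: y :: l, _ => exact ⟨x, y, l, rfl⟩
  have hx_unm : ¬ vMatched M x := hhead x rfl
  have hx : S x ↔ ¬ vInM M x y :=
    iff_of_true (hunm x hx_unm) fun hxy => hx_unm (vMatched_of_vInM hxy).1
  have hz_unm : ¬ vMatched M ((y :: l).getLast (List.cons_ne_nil y l)) :=
    hlast _ (by rw [List.getLast?_cons_cons, List.getLast?_eq_getLast])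
  obtain ⟨w, hw⟩ := exists_inM_getLast_of_alternating hind hcov l x y hadj halt hx (hunm _ hz_unm)
  exact hz_unm (vMatched_of_vInM hw).2

theorem not_inGM_of_cut (P : PrefSys A B) {M : Finset (A × B)} {f : V A B → Bool}
    (hfM : ∀ p ∈ M, f (Sum.inl p.1) = f (Sum.inr p.2))
    (hcut : ∀ y z, P.adj y z → f (Sum.inl y) = true → f (Sum.inr z) = false →
      ¬ P.voteAplus M y z ∧ ¬ P.voteBplus M y z)
    {a : A} {b : B} (ha : f (Sum.inl a) = true) (hb : f (Sum.inr b) = false) :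
    ¬ P.inGM M a b := by
  rintro ⟨hab, hmem | hvote | hvote⟩
  · simpa [ha, hb] using hfM _ hmem
  · exact (hcut a b hab ha hb).1 hvote
  · exact (hcut a b hab ha hb).2 hvote

end PrefSys

open PrefSys in
theorem f_values_no_aug_path_general {A B : Type}
    (P : PrefSys A B) (M : Finset (A × B))
    (f : V A B → Bool)
    (hfA : ∀ a : A, (∀ b, (a, b) ∉ M) → f (Sum.inl a) = true)
    (hfB : ∀ b : B, (∀ a, (a, b) ∉ M) → f (Sum.inr b) = false)
    (hfM : ∀ p ∈ M, f (Sum.inl p.1) = f (Sum.inr p.2))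
    (hcut : ∀ y z, P.adj y z → f (Sum.inl y) = true → f (Sum.inr z) = false →
      ¬ P.voteAplus M y z ∧ ¬ P.voteBplus M y z) :
    ¬ ∃ v, P.IsAugPath M v := by
  rintro ⟨v, hv⟩
  refine not_isAugPath_of_independent_cover P M (fun x => f x = x.isLeft) ?_ ?_ ?_ v hv
  · rintro (a | b) (a' | b') hxy hx hy
    · exact hxy
    · exact P.not_inGM_of_cut hfM hcut hx hy hxy
    · exact P.not_inGM_of_cut hfM hcut hy hx hxy
    · exact hxy
  · rintro (a | b) (a' | b') hxy
    · exact hxy.elim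
    · show f (.inl a) = true ∨ f (.inr b') = false
      rw [← hfM _ hxy]
      exact Bool.eq_false_or_eq_true _
    · show f (.inr b) = false ∨ f (.inl a') = true
      rw [← hfM _ hxy]
      exact (Bool.eq_false_or_eq_true _).symm
    · exact hxy.elim
  · rintro (a | b) hx
    · exact hfA a fun b hb => hx ⟨b, hb⟩
    · exact hfB b fun a ha => hx ⟨a, ha⟩

open PrefSys in
/-- if `f` assigns values in `{0,1}` (here `Bool`, `true = 1`) to
the vertices so that unmatched men get 1, unmatched women get 0, `M`-partners
get equal values, and every `G`-edge from a man of value 1 to a woman of value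
0 is labeled `(-,-)` (hence absent from `G_M`), then there is no augmenting
path with respect to `M` in `G_M`. -/
theorem f_values_no_aug_path {A B : Type} [Fintype A] [Fintype B]
    (P : PrefSys A B) (M : Finset (A × B)) (hM : P.IsMatching M)
    (f : V A B → Bool)
    (hfA : ∀ a : A, (∀ b, (a, b) ∉ M) → f (Sum.inl a) = true)
    (hfB : ∀ b : B, (∀ a, (a, b) ∉ M) → f (Sum.inr b) = false)
    (hfM : ∀ p ∈ M, f (Sum.inl p.1) = f (Sum.inr p.2))
    (hcut : ∀ y z, P.adj y z → f (Sum.inl y) = true → f (Sum.inr z) = false →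
      ¬ P.voteAplus M y z ∧ ¬ P.voteBplus M y z) :
    ¬ ∃ v, P.IsAugPath M v :=
  f_values_no_aug_path_general P M f hfA hfB hfM hcut
end
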